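/- arXiv:2102.08536 — 5 statements merged into one kernel-verified Lean document; each statement's English description precedes it below -/
import Mathlib

section
/- Let K > 0, and suppose: (i) for every k = 0,…,N−1, a_k ≤ K·( b_k + Σ_{ℓ=k+1}^{N−1} Δt_ℓ a_ℓ + ∫_S ( Σ_{ℓ=k+1}^{N−1} Δt_ℓ ζ_{ℓ,k}(x) )² dμ(x) ) (with the sums over ℓ empty when k = N−1); and (ii) for every k = 1,…,N−1, ∫_S Σ_{ℓ=0}^{k−1} Δt_ℓ ζ_{k,ℓ}(x)² dμ(x) ≤ K·( a_k + c_k ). Then for every γ ≥ 2K(1+K) one has Σ_{k=0}^{N−1} Γ_k a_k ≤ 2K Σ_{k=0}^{N−1} Γ_k b_k + Σ_{k=0}^{N−1} Γ_k c_k, where Γ_k := ∫_{t_k}^{t_{k+1}} e^{γ t} dt. (Discrete Gronwall-like inequality, weighted form; paper's Lemma 2.3, first conclusion.) -/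
open MeasureTheory Set

private lemma aux_sq_le (y : ℝ) (hy : 0 ≤ y) :
    y^2 ≤ (Real.exp y - 1) * (1 - Real.exp (-y)) := by
  have h : y/2 ≤ Real.sinh (y/2) := Real.self_le_sinh_iff.mpr (by linarith)
  rw [Real.sinh_eq] at h
  have h1 : Real.exp (y/2) * Real.exp (-(y/2)) = 1 := by
    rw [← Real.exp_add]; norm_num
  have h2 : Real.exp (y/2) * Real.exp (y/2) = Real.exp y := by
    rw [← Real.exp_add]; ring_nf
  have h3 : Real.exp (-(y/2)) * Real.exp (-(y/2)) = Real.exp (-y) := by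
    rw [← Real.exp_add]; ring_nf
  nlinarith [Real.exp_pos (y/2), Real.exp_pos (-(y/2))]

private lemma aux_telescope (g : ℕ → ℝ) :
    ∀ m n : ℕ, m ≤ n → ∑ ℓ ∈ Finset.Ico m n, (g ℓ - g (ℓ+1)) = g m - g n := by
  intro m n h
  induction n, h using Nat.le_induction with
  | base => simp
  | succ n hmn ih => rw [Finset.sum_Ico_succ_top hmn, ih]; ring

private lemma aux_Gamma_le {γ u v : ℝ} (hγ : 0 < γ) (huv : u ≤ v) :
    (Real.exp (γ*v) - Real.exp (γ*u))/γ ≤ (v - u) * Real.exp (γ*v) := by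
  rw [div_le_iff₀ hγ]
  have e : Real.exp (γ*u) = Real.exp (γ*v) * Real.exp (-(γ*(v-u))) := by
    rw [← Real.exp_add]; ring_nf
  nlinarith [Real.add_one_le_exp (-(γ*(v-u))), Real.exp_pos (γ*v)]

private lemma aux_Gamma_ge {γ u v : ℝ} (hγ : 0 < γ) (huv : u ≤ v) :
    (v - u) * Real.exp (γ*u) ≤ (Real.exp (γ*v) - Real.exp (γ*u))/γ := by
  rw [le_div_iff₀ hγ]
  have e : Real.exp (γ*v) = Real.exp (γ*u) * Real.exp (γ*(v-u)) := by
    rw [← Real.exp_add]; ring_nf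
  nlinarith [Real.add_one_le_exp (γ*(v-u)), Real.exp_pos (γ*u)]

private lemma aux_DsqG {γ u v : ℝ} (hγ : 0 < γ) (huv : u ≤ v) :
    (v - u)^2 ≤ ((Real.exp (γ*v) - Real.exp (γ*u))/γ)
      * ((Real.exp (-(γ*u)) - Real.exp (-(γ*v)))/γ) := by
  have hy : 0 ≤ γ*(v-u) := by nlinarith
  have h := aux_sq_le (γ*(v-u)) hy
  have e1 : Real.exp (γ*v) * Real.exp (-(γ*u)) = Real.exp (γ*(v-u)) := by
    rw [← Real.exp_add]; ring_nf
  have e2 : Real.exp (γ*u) * Real.exp (-(γ*v)) = Real.exp (-(γ*(v-u))) := by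
    rw [← Real.exp_add]; ring_nf
  have e3 : Real.exp (γ*u) * Real.exp (-(γ*u)) = 1 := by
    rw [← Real.exp_add]; norm_num
  have e4 : Real.exp (γ*v) * Real.exp (-(γ*v)) = 1 := by
    rw [← Real.exp_add]; norm_num
  rw [← e1, ← e2] at h
  rw [div_mul_div_comm, le_div_iff₀ (by positivity : (0:ℝ) < γ*γ)]
  nlinarith [h, e3, e4, Real.exp_pos (γ*u), Real.exp_pos (γ*v),
    Real.exp_pos (-(γ*u)), Real.exp_pos (-(γ*v))]

private lemma aux_main {N : ℕ} {K γ : ℝ} (hK : 0 < K) (hγpos : 0 < γ)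
    (hγ : 2*K*(1+K) ≤ γ)
    (Γ D a b c Q : ℕ → ℝ) (J : ℕ → ℕ → ℝ)
    (hΓ0 : ∀ k < N, 0 ≤ Γ k) (ha0 : ∀ k, 0 ≤ a k) (hc0 : ∀ k, 0 ≤ c k)
    (hQ : ∀ k < N, Γ k * Q k ≤ (D k / γ) * ∑ ℓ ∈ Finset.Ico (k+1) N, Γ ℓ * J ℓ k)
    (hsumΓ : ∀ ℓ < N, (∑ k ∈ Finset.range ℓ, Γ k) * D ℓ ≤ Γ ℓ / γ)
    (hJsum : ∀ ℓ < N, ∑ k ∈ Finset.range ℓ, D k * J ℓ k ≤ K * (a ℓ + c ℓ))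
    (h1' : ∀ k < N, a k ≤ K * (b k + (∑ ℓ ∈ Finset.Ico (k+1) N, D ℓ * a ℓ) + Q k)) :
    ∑ k ∈ Finset.range N, Γ k * a k
      ≤ 2*K*(∑ k ∈ Finset.range N, Γ k * b k) + ∑ k ∈ Finset.range N, Γ k * c k := by
  set X := ∑ k ∈ Finset.range N, Γ k * a k with hX
  set B := ∑ k ∈ Finset.range N, Γ k * b k with hB
  set C := ∑ k ∈ Finset.range N, Γ k * c k with hC
  have hX0 : 0 ≤ X := Finset.sum_nonneg fun k hk =>
    mul_nonneg (hΓ0 k (Finset.mem_range.mp hk)) (ha0 k)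
  have hC0 : 0 ≤ C := Finset.sum_nonneg fun k hk =>
    mul_nonneg (hΓ0 k (Finset.mem_range.mp hk)) (hc0 k)
  have step1 : X ≤ K*B + K*(∑ k ∈ Finset.range N, Γ k * ∑ ℓ ∈ Finset.Ico (k+1) N, D ℓ * a ℓ)
      + K*(∑ k ∈ Finset.range N, Γ k * Q k) := by
    have h : X ≤ ∑ k ∈ Finset.range N,
        Γ k * (K * (b k + (∑ ℓ ∈ Finset.Ico (k+1) N, D ℓ * a ℓ) + Q k)) := by
      apply Finset.sum_le_sum
      intro k hk
      exact mul_le_mul_of_nonneg_left (h1' k (Finset.mem_range.mp hk))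
        (hΓ0 k (Finset.mem_range.mp hk))
    calc X ≤ _ := h
      _ = K*B + K*(∑ k ∈ Finset.range N, Γ k * ∑ ℓ ∈ Finset.Ico (k+1) N, D ℓ * a ℓ)
          + K*(∑ k ∈ Finset.range N, Γ k * Q k) := by
        rw [hB, Finset.mul_sum, Finset.mul_sum, Finset.mul_sum, ← Finset.sum_add_distrib,
          ← Finset.sum_add_distrib]
        exact Finset.sum_congr rfl fun k _ => by ring
  have step2 : (∑ k ∈ Finset.range N, Γ k * ∑ ℓ ∈ Finset.Ico (k+1) N, D ℓ * a ℓ) ≤ X/γ := by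
    have swap : (∑ k ∈ Finset.range N, ∑ ℓ ∈ Finset.Ico (k+1) N, Γ k * (D ℓ * a ℓ))
        = ∑ ℓ ∈ Finset.range N, ∑ k ∈ Finset.range ℓ, Γ k * (D ℓ * a ℓ) := by
      simp only [Finset.range_eq_Ico]
      exact Finset.sum_Ico_Ico_comm' 0 N fun k ℓ => Γ k * (D ℓ * a ℓ)
    calc (∑ k ∈ Finset.range N, Γ k * ∑ ℓ ∈ Finset.Ico (k+1) N, D ℓ * a ℓ)
        = ∑ ℓ ∈ Finset.range N, ∑ k ∈ Finset.range ℓ, Γ k * (D ℓ * a ℓ) := by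
          rw [← swap]; exact Finset.sum_congr rfl fun k _ => Finset.mul_sum _ _ _
      _ ≤ ∑ ℓ ∈ Finset.range N, (Γ ℓ/γ) * a ℓ := by
          apply Finset.sum_le_sum
          intro ℓ hℓ
          have hℓN := Finset.mem_range.mp hℓ
          have e : ∑ k ∈ Finset.range ℓ, Γ k * (D ℓ * a ℓ)
              = ((∑ k ∈ Finset.range ℓ, Γ k) * D ℓ) * a ℓ := by
            rw [← Finset.sum_mul]; ring
          rw [e]
          exact mul_le_mul_of_nonneg_right (hsumΓ ℓ hℓN) (ha0 ℓ)
      _ = X/γ := by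
          rw [hX, Finset.sum_div]
          exact Finset.sum_congr rfl fun ℓ _ => by ring
  have step3 : (∑ k ∈ Finset.range N, Γ k * Q k) ≤ (K/γ) * (X + C) := by
    have swap : (∑ k ∈ Finset.range N, ∑ ℓ ∈ Finset.Ico (k+1) N, (D k/γ) * (Γ ℓ * J ℓ k))
        = ∑ ℓ ∈ Finset.range N, ∑ k ∈ Finset.range ℓ, (D k/γ) * (Γ ℓ * J ℓ k) := by
      simp only [Finset.range_eq_Ico]
      exact Finset.sum_Ico_Ico_comm' 0 N fun k ℓ => (D k/γ) * (Γ ℓ * J ℓ k)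
    calc (∑ k ∈ Finset.range N, Γ k * Q k)
        ≤ ∑ k ∈ Finset.range N, ∑ ℓ ∈ Finset.Ico (k+1) N, (D k/γ) * (Γ ℓ * J ℓ k) := by
          apply Finset.sum_le_sum
          intro k hk
          calc Γ k * Q k ≤ (D k / γ) * ∑ ℓ ∈ Finset.Ico (k+1) N, Γ ℓ * J ℓ k :=
                hQ k (Finset.mem_range.mp hk)
            _ = _ := Finset.mul_sum _ _ _
      _ = ∑ ℓ ∈ Finset.range N, ∑ k ∈ Finset.range ℓ, (D k/γ) * (Γ ℓ * J ℓ k) := swap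
      _ ≤ ∑ ℓ ∈ Finset.range N, (Γ ℓ/γ) * (K * (a ℓ + c ℓ)) := by
          apply Finset.sum_le_sum
          intro ℓ hℓ
          have hℓN := Finset.mem_range.mp hℓ
          have e : ∑ k ∈ Finset.range ℓ, (D k/γ) * (Γ ℓ * J ℓ k)
              = (Γ ℓ/γ) * ∑ k ∈ Finset.range ℓ, D k * J ℓ k := by
            rw [Finset.mul_sum]
            exact Finset.sum_congr rfl fun k _ => by ring
          rw [e]
          exact mul_le_mul_of_nonneg_left (hJsum ℓ hℓN)
            (div_nonneg (hΓ0 ℓ hℓN) hγpos.le)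
      _ = (K/γ) * (X + C) := by
          rw [hX, hC, ← Finset.sum_add_distrib, Finset.mul_sum]
          exact Finset.sum_congr rfl fun ℓ _ => by ring
  have key : X ≤ K*B + K*(X/γ) + K*((K/γ)*(X+C)) := by
    have t2 := mul_le_mul_of_nonneg_left step2 hK.le
    have t3 := mul_le_mul_of_nonneg_left step3 hK.le
    linarith [step1]
  have key' : γ * X ≤ γ*(K*B) + K*X + K*(K*(X+C)) := by
    have h := mul_le_mul_of_nonneg_left key hγpos.le
    have e : γ * (K*B + K*(X/γ) + K*((K/γ)*(X+C)))
        = γ*(K*B) + K*X + K*(K*(X+C)) := by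
      field_simp
    linarith [e ▸ h]
  have goal' : γ * X ≤ γ * (2*K*B + C) := by
    nlinarith [mul_nonneg (by linarith : (0:ℝ) ≤ γ - 2*K*(1+K)) hX0,
      mul_nonneg (by nlinarith : (0:ℝ) ≤ γ - 2*K^2) hC0]
  exact le_of_mul_le_mul_left goal' hγpos
/-- Discrete Gronwall-like inequality, weighted form (Lemma 2.3, first conclusion). -/
theorem stmt_3
    {T : ℝ} (hT : 0 < T)
    {S : Type*} [MeasurableSpace S] (μ : Measure S)
    {N : ℕ} (hN : 2 ≤ N) (t : ℕ → ℝ)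
    (ht0 : t 0 = 0) (htN : t N = T)
    (htmono : ∀ k < N, t k < t (k + 1))
    (a b c : ℕ → ℝ) (ζ : ℕ → ℕ → S → ℝ)
    (ha0 : ∀ k, 0 ≤ a k) (hb0 : ∀ k, 0 ≤ b k) (hc0 : ∀ k, 0 ≤ c k)
    (hζ0 : ∀ k ℓ x, 0 ≤ ζ k ℓ x)
    (hζm : ∀ k ℓ, Measurable (ζ k ℓ))
    {K : ℝ} (hK : 0 < K)
    (h1 : ∀ k < N,
      ENNReal.ofReal (a k) ≤ ENNReal.ofReal K *
        (ENNReal.ofReal (b k)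
          + ENNReal.ofReal (∑ ℓ ∈ Finset.Ico (k + 1) N, (t (ℓ + 1) - t ℓ) * a ℓ)
          + ∫⁻ x, ENNReal.ofReal
              ((∑ ℓ ∈ Finset.Ico (k + 1) N, (t (ℓ + 1) - t ℓ) * ζ ℓ k x) ^ 2) ∂μ))
    (h2 : ∀ k, 1 ≤ k → k < N →
      (∫⁻ x, ENNReal.ofReal
          (∑ ℓ ∈ Finset.range k, (t (ℓ + 1) - t ℓ) * (ζ k ℓ x) ^ 2) ∂μ)
        ≤ ENNReal.ofReal (K * (a k + c k)))
    {γ : ℝ} (hγ : 2 * K * (1 + K) ≤ γ) :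
    (∑ k ∈ Finset.range N, (∫ s in (t k)..(t (k + 1)), Real.exp (γ * s)) * a k)
      ≤ 2 * K * (∑ k ∈ Finset.range N,
            (∫ s in (t k)..(t (k + 1)), Real.exp (γ * s)) * b k)
        + ∑ k ∈ Finset.range N,
            (∫ s in (t k)..(t (k + 1)), Real.exp (γ * s)) * c k := by
  have hγpos : 0 < γ := lt_of_lt_of_le (by positivity) hγ
  have hγ0 : γ ≠ 0 := ne_of_gt hγpos
  have htnn : ∀ k, k ≤ N → 0 ≤ t k := by
    intro k hk
    induction k with
    | zero => simp [ht0]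
    | succ n ih =>
      have h1 := htmono n (by omega)
      have h2 := ih (by omega)
      linarith
  have htle : ∀ k, k < N → t k ≤ t (k+1) := fun k hk => (htmono k hk).le
  have hint : ∀ k : ℕ, (∫ s in (t k)..(t (k + 1)), Real.exp (γ * s))
      = (Real.exp (γ * t (k+1)) - Real.exp (γ * t k))/γ := by
    intro k
    rw [intervalIntegral.integral_comp_mul_left (fun x => Real.exp x) hγ0]
    simp [integral_exp, smul_eq_mul]
    ring
  simp only [hint]
  have hΓpos : ∀ k, k < N → 0 < (Real.exp (γ * t (k+1)) - Real.exp (γ * t k))/γ := by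
    intro k hk
    apply div_pos _ hγpos
    have h := htmono k hk
    have h' : γ * t k < γ * t (k+1) := by nlinarith
    exact sub_pos.mpr (Real.exp_lt_exp.mpr h')
  have hζsqm : ∀ ℓ k : ℕ, Measurable fun x => ENNReal.ofReal ((ζ ℓ k x)^2) :=
    fun ℓ k => ENNReal.measurable_ofReal.comp ((hζm ℓ k).pow_const 2)
  -- splitting h2's integral
  have hsplit : ∀ ℓ, ℓ < N →
      (∫⁻ x, ENNReal.ofReal (∑ k ∈ Finset.range ℓ, (t (k+1) - t k) * (ζ ℓ k x)^2) ∂μ)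
      = ∑ k ∈ Finset.range ℓ, ENNReal.ofReal (t (k+1) - t k)
          * (∫⁻ x, ENNReal.ofReal ((ζ ℓ k x)^2) ∂μ) := by
    intro ℓ hℓ
    have hpt : ∀ x, ENNReal.ofReal (∑ k ∈ Finset.range ℓ, (t (k+1) - t k) * (ζ ℓ k x)^2)
        = ∑ k ∈ Finset.range ℓ, ENNReal.ofReal (t (k+1) - t k)
            * ENNReal.ofReal ((ζ ℓ k x)^2) := by
      intro x
      rw [ENNReal.ofReal_sum_of_nonneg]
      · exact Finset.sum_congr rfl fun k hk => ENNReal.ofReal_mul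
          (by have := htmono k (by have := Finset.mem_range.mp hk; omega); linarith)
      · intro k hk
        have hD := htmono k (by have := Finset.mem_range.mp hk; omega)
        have := sq_nonneg (ζ ℓ k x)
        nlinarith
    simp_rw [hpt]
    rw [lintegral_finset_sum _ (fun k _ => ((hζsqm ℓ k).const_mul _))]
    exact Finset.sum_congr rfl fun k _ => lintegral_const_mul _ (hζsqm ℓ k)
  have hIfin : ∀ ℓ, ℓ < N → ∀ k, k < ℓ → (∫⁻ x, ENNReal.ofReal ((ζ ℓ k x)^2) ∂μ) ≠ ⊤ := by
    intro ℓ hℓ k hk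
    have hh := h2 ℓ (by omega) hℓ
    rw [hsplit ℓ hℓ] at hh
    have hsingle : ENNReal.ofReal (t (k+1) - t k) * (∫⁻ x, ENNReal.ofReal ((ζ ℓ k x)^2) ∂μ)
        ≤ ENNReal.ofReal (K * (a ℓ + c ℓ)) :=
      le_trans (Finset.single_le_sum (f := fun k => ENNReal.ofReal (t (k+1) - t k)
        * (∫⁻ x, ENNReal.ofReal ((ζ ℓ k x)^2) ∂μ)) (fun i _ => zero_le)
        (Finset.mem_range.mpr hk)) hh
    intro htop
    have hDk : 0 < t (k+1) - t k := sub_pos.mpr (htmono k (by omega))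
    rw [htop, ENNReal.mul_top (by simp [ENNReal.ofReal_eq_zero]; linarith)] at hsingle
    exact ENNReal.ofReal_ne_top (top_le_iff.mp hsingle)
  have hJsum : ∀ ℓ, ℓ < N →
      ∑ k ∈ Finset.range ℓ, (t (k+1) - t k)
        * (∫⁻ x, ENNReal.ofReal ((ζ ℓ k x)^2) ∂μ).toReal ≤ K * (a ℓ + c ℓ) := by
    intro ℓ hℓ
    rcases Nat.eq_zero_or_pos ℓ with h0 | h1pos
    · subst h0; simp; exact mul_nonneg hK.le (add_nonneg (ha0 0) (hc0 0))
    · have hh := h2 ℓ h1pos hℓ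
      rw [hsplit ℓ hℓ] at hh
      have h' := ENNReal.toReal_mono ENNReal.ofReal_ne_top hh
      rw [ENNReal.toReal_ofReal (mul_nonneg hK.le (add_nonneg (ha0 ℓ) (hc0 ℓ)))] at h'
      rw [ENNReal.toReal_sum (fun k hk => ENNReal.mul_ne_top ENNReal.ofReal_ne_top
        (hIfin ℓ hℓ k (Finset.mem_range.mp hk)))] at h'
      calc ∑ k ∈ Finset.range ℓ, (t (k+1) - t k)
            * (∫⁻ x, ENNReal.ofReal ((ζ ℓ k x)^2) ∂μ).toReal
          = ∑ k ∈ Finset.range ℓ, (ENNReal.ofReal (t (k+1) - t k)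
            * (∫⁻ x, ENNReal.ofReal ((ζ ℓ k x)^2) ∂μ)).toReal := by
            refine Finset.sum_congr rfl fun k hk => ?_
            rw [ENNReal.toReal_mul, ENNReal.toReal_ofReal
              (by have := htmono k (by have := Finset.mem_range.mp hk; omega); linarith)]
        _ ≤ K * (a ℓ + c ℓ) := h'
  -- step B : Cauchy-Schwarz bound on the square integral
  have hQbound : ∀ k, k < N →
      ((∫⁻ x, ENNReal.ofReal
          ((∑ ℓ ∈ Finset.Ico (k+1) N, (t (ℓ+1) - t ℓ) * ζ ℓ k x)^2) ∂μ) ≠ ⊤) ∧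
      ((∫⁻ x, ENNReal.ofReal
          ((∑ ℓ ∈ Finset.Ico (k+1) N, (t (ℓ+1) - t ℓ) * ζ ℓ k x)^2) ∂μ).toReal
        ≤ (Real.exp (-(γ * t (k+1)))/γ) * ∑ ℓ ∈ Finset.Ico (k+1) N,
            ((Real.exp (γ * t (ℓ+1)) - Real.exp (γ * t ℓ))/γ)
              * (∫⁻ x, ENNReal.ofReal ((ζ ℓ k x)^2) ∂μ).toReal) := by
    intro k hk
    have hmem : ∀ ℓ ∈ Finset.Ico (k+1) N, k < ℓ ∧ ℓ < N := by
      intro ℓ hℓ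
      have := Finset.mem_Ico.mp hℓ
      omega
    -- pointwise Cauchy-Schwarz
    have hpt : ∀ x, (∑ ℓ ∈ Finset.Ico (k+1) N, (t (ℓ+1) - t ℓ) * ζ ℓ k x)^2
        ≤ (Real.exp (-(γ * t (k+1)))/γ) * ∑ ℓ ∈ Finset.Ico (k+1) N,
            ((Real.exp (γ * t (ℓ+1)) - Real.exp (γ * t ℓ))/γ) * (ζ ℓ k x)^2 := by
      intro x
      have hcs := Finset.sum_mul_sq_le_sq_mul_sq (Finset.Ico (k+1) N)
        (fun ℓ => (t (ℓ+1) - t ℓ)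
          / Real.sqrt ((Real.exp (γ * t (ℓ+1)) - Real.exp (γ * t ℓ))/γ))
        (fun ℓ => Real.sqrt ((Real.exp (γ * t (ℓ+1)) - Real.exp (γ * t ℓ))/γ) * ζ ℓ k x)
      have e1 : ∑ ℓ ∈ Finset.Ico (k+1) N,
          ((t (ℓ+1) - t ℓ) / Real.sqrt ((Real.exp (γ * t (ℓ+1)) - Real.exp (γ * t ℓ))/γ))
            * (Real.sqrt ((Real.exp (γ * t (ℓ+1)) - Real.exp (γ * t ℓ))/γ) * ζ ℓ k x)
          = ∑ ℓ ∈ Finset.Ico (k+1) N, (t (ℓ+1) - t ℓ) * ζ ℓ k x := by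
        refine Finset.sum_congr rfl fun ℓ hℓ => ?_
        have hs : Real.sqrt ((Real.exp (γ * t (ℓ+1)) - Real.exp (γ * t ℓ))/γ) ≠ 0 :=
          Real.sqrt_ne_zero'.mpr (hΓpos ℓ (hmem ℓ hℓ).2)
        have hgen : ∀ (d z s : ℝ), s ≠ 0 → d / s * (s * z) = d * z := by
          intro d z s hs0; field_simp
        exact hgen _ _ _ hs
      have e3 : ∑ ℓ ∈ Finset.Ico (k+1) N,
          (Real.sqrt ((Real.exp (γ * t (ℓ+1)) - Real.exp (γ * t ℓ))/γ) * ζ ℓ k x)^2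
          = ∑ ℓ ∈ Finset.Ico (k+1) N,
            ((Real.exp (γ * t (ℓ+1)) - Real.exp (γ * t ℓ))/γ) * (ζ ℓ k x)^2 := by
        refine Finset.sum_congr rfl fun ℓ hℓ => ?_
        rw [mul_pow, Real.sq_sqrt (hΓpos ℓ (hmem ℓ hℓ).2).le]
      have e2 : ∑ ℓ ∈ Finset.Ico (k+1) N,
          ((t (ℓ+1) - t ℓ) / Real.sqrt ((Real.exp (γ * t (ℓ+1)) - Real.exp (γ * t ℓ))/γ))^2
          ≤ Real.exp (-(γ * t (k+1)))/γ := by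
        have hterm : ∀ ℓ ∈ Finset.Ico (k+1) N,
            ((t (ℓ+1) - t ℓ) / Real.sqrt ((Real.exp (γ * t (ℓ+1)) - Real.exp (γ * t ℓ))/γ))^2
            ≤ (Real.exp (-(γ * t ℓ)) - Real.exp (-(γ * t (ℓ+1))))/γ := by
          intro ℓ hℓ
          have hΓl := hΓpos ℓ (hmem ℓ hℓ).2
          rw [div_pow, Real.sq_sqrt hΓl.le, div_le_iff₀ hΓl]
          have h := aux_DsqG hγpos (htle ℓ (hmem ℓ hℓ).2)
          calc (t (ℓ+1) - t ℓ)^2 ≤ _ := h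
            _ = (Real.exp (-(γ * t ℓ)) - Real.exp (-(γ * t (ℓ+1))))/γ
                * ((Real.exp (γ * t (ℓ+1)) - Real.exp (γ * t ℓ))/γ) := by ring
        calc ∑ ℓ ∈ Finset.Ico (k+1) N,
              ((t (ℓ+1) - t ℓ) / Real.sqrt ((Real.exp (γ * t (ℓ+1)) - Real.exp (γ * t ℓ))/γ))^2
            ≤ ∑ ℓ ∈ Finset.Ico (k+1) N,
              (Real.exp (-(γ * t ℓ)) - Real.exp (-(γ * t (ℓ+1))))/γ :=
              Finset.sum_le_sum hterm
          _ = (Real.exp (-(γ * t (k+1))) - Real.exp (-(γ * t N)))/γ := by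
              rw [← Finset.sum_div]
              congr 1
              exact aux_telescope (fun j => Real.exp (-(γ * t j))) (k+1) N (by omega)
          _ ≤ Real.exp (-(γ * t (k+1)))/γ := by
              gcongr
              linarith [Real.exp_pos (-(γ * t N))]
      calc (∑ ℓ ∈ Finset.Ico (k+1) N, (t (ℓ+1) - t ℓ) * ζ ℓ k x)^2
          = (∑ ℓ ∈ Finset.Ico (k+1) N,
              ((t (ℓ+1) - t ℓ) / Real.sqrt ((Real.exp (γ * t (ℓ+1)) - Real.exp (γ * t ℓ))/γ))
                * (Real.sqrt ((Real.exp (γ * t (ℓ+1)) - Real.exp (γ * t ℓ))/γ) * ζ ℓ k x))^2 := by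
            rw [e1]
        _ ≤ _ := hcs
        _ ≤ (Real.exp (-(γ * t (k+1)))/γ) * ∑ ℓ ∈ Finset.Ico (k+1) N,
              (Real.sqrt ((Real.exp (γ * t (ℓ+1)) - Real.exp (γ * t ℓ))/γ) * ζ ℓ k x)^2 :=
            mul_le_mul_of_nonneg_right e2 (Finset.sum_nonneg fun ℓ _ => sq_nonneg _)
        _ = _ := by rw [e3]
    -- lintegral bound
    have hL : (∫⁻ x, ENNReal.ofReal
          ((∑ ℓ ∈ Finset.Ico (k+1) N, (t (ℓ+1) - t ℓ) * ζ ℓ k x)^2) ∂μ)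
        ≤ ENNReal.ofReal (Real.exp (-(γ * t (k+1)))/γ) *
            ∑ ℓ ∈ Finset.Ico (k+1) N,
              ENNReal.ofReal ((Real.exp (γ * t (ℓ+1)) - Real.exp (γ * t ℓ))/γ)
                * (∫⁻ x, ENNReal.ofReal ((ζ ℓ k x)^2) ∂μ) := by
      have hpt2 : ∀ x, ENNReal.ofReal ((Real.exp (-(γ * t (k+1)))/γ)
            * ∑ ℓ ∈ Finset.Ico (k+1) N,
              ((Real.exp (γ * t (ℓ+1)) - Real.exp (γ * t ℓ))/γ) * (ζ ℓ k x)^2)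
          = ENNReal.ofReal (Real.exp (-(γ * t (k+1)))/γ)
            * ∑ ℓ ∈ Finset.Ico (k+1) N,
              ENNReal.ofReal ((Real.exp (γ * t (ℓ+1)) - Real.exp (γ * t ℓ))/γ)
                * ENNReal.ofReal ((ζ ℓ k x)^2) := by
        intro x
        rw [ENNReal.ofReal_mul (div_nonneg (Real.exp_pos _).le hγpos.le)]
        congr 1
        rw [ENNReal.ofReal_sum_of_nonneg
          (fun ℓ hℓ => mul_nonneg (hΓpos ℓ (hmem ℓ hℓ).2).le (sq_nonneg _))]
        exact Finset.sum_congr rfl fun ℓ hℓ =>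
          ENNReal.ofReal_mul (hΓpos ℓ (hmem ℓ hℓ).2).le
      calc (∫⁻ x, ENNReal.ofReal
            ((∑ ℓ ∈ Finset.Ico (k+1) N, (t (ℓ+1) - t ℓ) * ζ ℓ k x)^2) ∂μ)
          ≤ ∫⁻ x, ENNReal.ofReal ((Real.exp (-(γ * t (k+1)))/γ)
              * ∑ ℓ ∈ Finset.Ico (k+1) N,
                ((Real.exp (γ * t (ℓ+1)) - Real.exp (γ * t ℓ))/γ) * (ζ ℓ k x)^2) ∂μ :=
            lintegral_mono fun x => ENNReal.ofReal_le_ofReal (hpt x)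
        _ = ENNReal.ofReal (Real.exp (-(γ * t (k+1)))/γ) *
            ∫⁻ x, ∑ ℓ ∈ Finset.Ico (k+1) N,
              ENNReal.ofReal ((Real.exp (γ * t (ℓ+1)) - Real.exp (γ * t ℓ))/γ)
                * ENNReal.ofReal ((ζ ℓ k x)^2) ∂μ := by
            simp_rw [hpt2]
            rw [lintegral_const_mul _ (Finset.measurable_sum _
              (fun ℓ _ => (hζsqm ℓ k).const_mul _))]
        _ = _ := by
            congr 1
            rw [lintegral_finset_sum _ (fun ℓ _ => (hζsqm ℓ k).const_mul _)]
            exact Finset.sum_congr rfl fun ℓ _ => lintegral_const_mul _ (hζsqm ℓ k)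
    have hRfin : (ENNReal.ofReal (Real.exp (-(γ * t (k+1)))/γ) *
        ∑ ℓ ∈ Finset.Ico (k+1) N,
          ENNReal.ofReal ((Real.exp (γ * t (ℓ+1)) - Real.exp (γ * t ℓ))/γ)
            * (∫⁻ x, ENNReal.ofReal ((ζ ℓ k x)^2) ∂μ)) ≠ ⊤ := by
      apply ENNReal.mul_ne_top ENNReal.ofReal_ne_top
      rw [← lt_top_iff_ne_top]
      apply ENNReal.sum_lt_top.mpr
      intro ℓ hℓ
      rw [lt_top_iff_ne_top]
      exact ENNReal.mul_ne_top ENNReal.ofReal_ne_top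
        (hIfin ℓ (hmem ℓ hℓ).2 k (hmem ℓ hℓ).1)
    refine ⟨ne_top_of_le_ne_top hRfin hL, ?_⟩
    have h' := ENNReal.toReal_mono hRfin hL
    calc (∫⁻ x, ENNReal.ofReal
          ((∑ ℓ ∈ Finset.Ico (k+1) N, (t (ℓ+1) - t ℓ) * ζ ℓ k x)^2) ∂μ).toReal
        ≤ (ENNReal.ofReal (Real.exp (-(γ * t (k+1)))/γ) *
            ∑ ℓ ∈ Finset.Ico (k+1) N,
              ENNReal.ofReal ((Real.exp (γ * t (ℓ+1)) - Real.exp (γ * t ℓ))/γ)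
                * (∫⁻ x, ENNReal.ofReal ((ζ ℓ k x)^2) ∂μ)).toReal := h'
      _ = (Real.exp (-(γ * t (k+1)))/γ) * ∑ ℓ ∈ Finset.Ico (k+1) N,
            ((Real.exp (γ * t (ℓ+1)) - Real.exp (γ * t ℓ))/γ)
              * (∫⁻ x, ENNReal.ofReal ((ζ ℓ k x)^2) ∂μ).toReal := by
          rw [ENNReal.toReal_mul, ENNReal.toReal_ofReal
            (div_nonneg (Real.exp_pos _).le hγpos.le)]
          congr 1
          rw [ENNReal.toReal_sum (fun ℓ hℓ => ENNReal.mul_ne_top ENNReal.ofReal_ne_top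
            (hIfin ℓ (hmem ℓ hℓ).2 k (hmem ℓ hℓ).1))]
          exact Finset.sum_congr rfl fun ℓ hℓ => by
            rw [ENNReal.toReal_mul, ENNReal.toReal_ofReal (hΓpos ℓ (hmem ℓ hℓ).2).le]
  -- h1 in real form
  have h1' : ∀ k, k < N → a k ≤ K * (b k
      + (∑ ℓ ∈ Finset.Ico (k+1) N, (t (ℓ+1) - t ℓ) * a ℓ)
      + (∫⁻ x, ENNReal.ofReal
          ((∑ ℓ ∈ Finset.Ico (k+1) N, (t (ℓ+1) - t ℓ) * ζ ℓ k x)^2) ∂μ).toReal) := by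
    intro k hk
    obtain ⟨hLfin, -⟩ := hQbound k hk
    have h := h1 k hk
    have hS0 : 0 ≤ ∑ ℓ ∈ Finset.Ico (k+1) N, (t (ℓ+1) - t ℓ) * a ℓ :=
      Finset.sum_nonneg fun ℓ hℓ => mul_nonneg
        (by have := htmono ℓ (Finset.mem_Ico.mp hℓ).2; linarith) (ha0 ℓ)
    have hRfin : (ENNReal.ofReal K * (ENNReal.ofReal (b k)
        + ENNReal.ofReal (∑ ℓ ∈ Finset.Ico (k+1) N, (t (ℓ+1) - t ℓ) * a ℓ)
        + ∫⁻ x, ENNReal.ofReal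
            ((∑ ℓ ∈ Finset.Ico (k+1) N, (t (ℓ+1) - t ℓ) * ζ ℓ k x)^2) ∂μ)) ≠ ⊤ :=
      ENNReal.mul_ne_top ENNReal.ofReal_ne_top
        (ENNReal.add_ne_top.mpr ⟨ENNReal.add_ne_top.mpr
          ⟨ENNReal.ofReal_ne_top, ENNReal.ofReal_ne_top⟩, hLfin⟩)
    have h' := ENNReal.toReal_mono hRfin h
    rw [ENNReal.toReal_ofReal (ha0 k), ENNReal.toReal_mul,
      ENNReal.toReal_add (ENNReal.add_ne_top.mpr
        ⟨ENNReal.ofReal_ne_top, ENNReal.ofReal_ne_top⟩) hLfin,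
      ENNReal.toReal_add ENNReal.ofReal_ne_top ENNReal.ofReal_ne_top,
      ENNReal.toReal_ofReal hK.le, ENNReal.toReal_ofReal (hb0 k),
      ENNReal.toReal_ofReal hS0] at h'
    exact h'
  -- hQ for aux_main
  have hQ : ∀ k, k < N →
      ((Real.exp (γ * t (k+1)) - Real.exp (γ * t k))/γ)
        * (∫⁻ x, ENNReal.ofReal
            ((∑ ℓ ∈ Finset.Ico (k+1) N, (t (ℓ+1) - t ℓ) * ζ ℓ k x)^2) ∂μ).toReal
      ≤ ((t (k+1) - t k)/γ) * ∑ ℓ ∈ Finset.Ico (k+1) N,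
          ((Real.exp (γ * t (ℓ+1)) - Real.exp (γ * t ℓ))/γ)
            * (∫⁻ x, ENNReal.ofReal ((ζ ℓ k x)^2) ∂μ).toReal := by
    intro k hk
    obtain ⟨-, hQle⟩ := hQbound k hk
    have hSig0 : 0 ≤ ∑ ℓ ∈ Finset.Ico (k+1) N,
        ((Real.exp (γ * t (ℓ+1)) - Real.exp (γ * t ℓ))/γ)
          * (∫⁻ x, ENNReal.ofReal ((ζ ℓ k x)^2) ∂μ).toReal :=
      Finset.sum_nonneg fun ℓ hℓ => mul_nonneg
        (hΓpos ℓ (Finset.mem_Ico.mp hℓ).2).le ENNReal.toReal_nonneg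
    have hEF : Real.exp (γ * t (k+1)) * Real.exp (-(γ * t (k+1))) = 1 := by
      rw [← Real.exp_add]; norm_num
    have hΓle : (Real.exp (γ * t (k+1)) - Real.exp (γ * t k))/γ
        ≤ (t (k+1) - t k) * Real.exp (γ * t (k+1)) := aux_Gamma_le hγpos (htle k hk)
    calc ((Real.exp (γ * t (k+1)) - Real.exp (γ * t k))/γ)
          * (∫⁻ x, ENNReal.ofReal
              ((∑ ℓ ∈ Finset.Ico (k+1) N, (t (ℓ+1) - t ℓ) * ζ ℓ k x)^2) ∂μ).toReal
        ≤ ((Real.exp (γ * t (k+1)) - Real.exp (γ * t k))/γ)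
          * ((Real.exp (-(γ * t (k+1)))/γ) * ∑ ℓ ∈ Finset.Ico (k+1) N,
              ((Real.exp (γ * t (ℓ+1)) - Real.exp (γ * t ℓ))/γ)
                * (∫⁻ x, ENNReal.ofReal ((ζ ℓ k x)^2) ∂μ).toReal) :=
          mul_le_mul_of_nonneg_left hQle (hΓpos k hk).le
      _ ≤ ((t (k+1) - t k) * Real.exp (γ * t (k+1)))
          * ((Real.exp (-(γ * t (k+1)))/γ) * ∑ ℓ ∈ Finset.Ico (k+1) N,
              ((Real.exp (γ * t (ℓ+1)) - Real.exp (γ * t ℓ))/γ)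
                * (∫⁻ x, ENNReal.ofReal ((ζ ℓ k x)^2) ∂μ).toReal) :=
          mul_le_mul_of_nonneg_right hΓle
            (mul_nonneg (div_nonneg (Real.exp_pos _).le hγpos.le) hSig0)
      _ = ((t (k+1) - t k)/γ) * (∑ ℓ ∈ Finset.Ico (k+1) N,
              ((Real.exp (γ * t (ℓ+1)) - Real.exp (γ * t ℓ))/γ)
                * (∫⁻ x, ENNReal.ofReal ((ζ ℓ k x)^2) ∂μ).toReal)
            * (Real.exp (γ * t (k+1)) * Real.exp (-(γ * t (k+1)))) := by ring
      _ = _ := by rw [hEF, mul_one]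
  -- hsumΓ for aux_main
  have hsumΓ : ∀ ℓ, ℓ < N →
      (∑ k ∈ Finset.range ℓ, (Real.exp (γ * t (k+1)) - Real.exp (γ * t k))/γ)
        * (t (ℓ+1) - t ℓ)
      ≤ ((Real.exp (γ * t (ℓ+1)) - Real.exp (γ * t ℓ))/γ)/γ := by
    intro ℓ hℓ
    have htel : (∑ k ∈ Finset.range ℓ, (Real.exp (γ * t (k+1)) - Real.exp (γ * t k))/γ)
        = (Real.exp (γ * t ℓ) - 1)/γ := by
      rw [← Finset.sum_div, Finset.sum_range_sub (fun k => Real.exp (γ * t k))]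
      simp [ht0]
    rw [htel]
    have hge : (t (ℓ+1) - t ℓ) * Real.exp (γ * t ℓ)
        ≤ (Real.exp (γ * t (ℓ+1)) - Real.exp (γ * t ℓ))/γ := aux_Gamma_ge hγpos (htle ℓ hℓ)
    have hD : 0 < t (ℓ+1) - t ℓ := sub_pos.mpr (htmono ℓ hℓ)
    have hE1 : 1 ≤ Real.exp (γ * t ℓ) :=
      Real.one_le_exp (mul_nonneg hγpos.le (htnn ℓ (by omega)))
    rw [div_mul_eq_mul_div, div_le_div_iff₀ hγpos hγpos]
    nlinarith [hge, hD, hE1, hγpos]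
  -- apply the main algebraic lemma
  exact aux_main hK hγpos hγ
    (fun k => (Real.exp (γ * t (k+1)) - Real.exp (γ * t k))/γ)
    (fun k => t (k+1) - t k) a b c
    (fun k => (∫⁻ x, ENNReal.ofReal
        ((∑ ℓ ∈ Finset.Ico (k+1) N, (t (ℓ+1) - t ℓ) * ζ ℓ k x)^2) ∂μ).toReal)
    (fun ℓ k => (∫⁻ x, ENNReal.ofReal ((ζ ℓ k x)^2) ∂μ).toReal)
    (fun k hk => (hΓpos k hk).le) ha0 hc0 hQ hsumΓ hJsum h1'
end

section
/- Let K > 0, and suppose: (i) for every k = 0,…,N−1, a_k ≤ K·( b_k + Σ_{ℓ=k+1}^{N−1} Δt_ℓ a_ℓ + ∫_S ( Σ_{ℓ=k+1}^{N−1} Δt_ℓ ζ_{ℓ,k}(x) )² dμ(x) ) (with the sums over ℓ empty when k = N−1); and (ii) for every k = 1,…,N−1, ∫_S Σ_{ℓ=0}^{k−1} Δt_ℓ ζ_{k,ℓ}(x)² dμ(x) ≤ K·( a_k + c_k ). Then Σ_{k=0}^{N−1} Δt_k a_k ≤ (2K+1)·e^{2K(1+K)T} · Σ_{k=0}^{N−1}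 Δt_k ( b_k + c_k ). (Discrete Gronwall-like inequality, unweighted form; paper's Lemma 2.3, second conclusion.) -/
open MeasureTheory Set

private lemma sum_triangle_comm {β : Type*} [AddCommMonoid β] (N : ℕ) (f : ℕ → ℕ → β) :
    ∑ k ∈ Finset.range N, ∑ ℓ ∈ Finset.Ico (k+1) N, f k ℓ
      = ∑ ℓ ∈ Finset.range N, ∑ k ∈ Finset.range ℓ, f k ℓ := by
  have h1 : ∀ k, ∑ ℓ ∈ Finset.Ico (k+1) N, f k ℓ
      = ∑ ℓ ∈ Finset.range N, if k < ℓ then f k ℓ else 0 := by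
    intro k
    rw [← Finset.sum_filter]
    apply Finset.sum_congr _ (fun _ _ => rfl)
    ext ℓ; simp [Finset.mem_Ico]; omega
  have h2 : ∀ ℓ ∈ Finset.range N, (∑ k ∈ Finset.range ℓ, f k ℓ)
      = ∑ k ∈ Finset.range N, if k < ℓ then f k ℓ else 0 := by
    intro ℓ hℓ
    rw [← Finset.sum_filter]
    apply Finset.sum_congr _ (fun _ _ => rfl)
    simp only [Finset.mem_range] at hℓ
    ext k; simp [Finset.mem_range]; omega
  simp_rw [h1]
  rw [Finset.sum_comm]
  exact (Finset.sum_congr rfl fun ℓ hℓ => (h2 ℓ hℓ).symm)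

private lemma exp_sub_ge (γ a b : ℝ) (h : a ≤ b) :
    γ * (b - a) * Real.exp (γ * a) ≤ Real.exp (γ * b) - Real.exp (γ * a) := by
  have h1 : Real.exp (γ * b) = Real.exp (γ * a) * Real.exp (γ * (b - a)) := by
    rw [← Real.exp_add]; ring_nf
  have h2 := Real.add_one_le_exp (γ * (b - a))
  nlinarith [Real.exp_pos (γ * a)]

private lemma exp_sub_le (γ a b : ℝ) (h : a ≤ b) :
    Real.exp (γ * b) - Real.exp (γ * a) ≤ γ * (b - a) * Real.exp (γ * b) := by
  have h1 : Real.exp (γ * a) = Real.exp (γ * b) * Real.exp (γ * (a - b)) := by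
    rw [← Real.exp_add]; ring_nf
  have h2 := Real.add_one_le_exp (γ * (a - b))
  nlinarith [Real.exp_pos (γ * b)]

private lemma sq_le_exp_mul (γ a b : ℝ) (hγ : 0 ≤ γ) (h : a ≤ b) :
    (γ * (b - a))^2 ≤ (Real.exp (γ * b) - Real.exp (γ * a))
      * (Real.exp (-(γ * a)) - Real.exp (-(γ * b))) := by
  set u := γ * (b - a) with hu
  have hu0 : 0 ≤ u := mul_nonneg hγ (by linarith)
  have key : u ≤ Real.exp (u/2) - Real.exp (-(u/2)) := by
    have hs : u / 2 ≤ Real.sinh (u/2) := Real.self_le_sinh_iff.mpr (by linarith)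
    rw [Real.sinh_eq] at hs
    linarith
  have e1 : Real.exp (u/2) * Real.exp (u/2) = Real.exp u := by
    rw [← Real.exp_add]; congr 1; ring
  have e2 : Real.exp (-(u/2)) * Real.exp (-(u/2)) = Real.exp (-u) := by
    rw [← Real.exp_add]; congr 1; ring
  have e3 : Real.exp (u/2) * Real.exp (-(u/2)) = 1 := by
    rw [← Real.exp_add]; norm_num
  have f1 : Real.exp (γ * b) * Real.exp (-(γ * a)) = Real.exp u := by
    rw [← Real.exp_add]; congr 1; rw [hu]; ring
  have f2 : Real.exp (γ * a) * Real.exp (-(γ * b)) = Real.exp (-u) := by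
    rw [← Real.exp_add]; congr 1; rw [hu]; ring
  have f3 : Real.exp (γ * b) * Real.exp (-(γ * b)) = 1 := by
    rw [← Real.exp_add]; norm_num
  have f4 : Real.exp (γ * a) * Real.exp (-(γ * a)) = 1 := by
    rw [← Real.exp_add]; norm_num
  have hsq := mul_self_le_mul_self hu0 key
  nlinarith [hsq]

set_option maxHeartbeats 2000000 in
/-- Discrete Gronwall-like inequality, unweighted form (Lemma 2.3, second conclusion). -/
theorem stmt_4
    {T : ℝ} (hT : 0 < T)
    {S : Type*} [MeasurableSpace S] (μ : Measure S)
    {N : ℕ} (hN : 2 ≤ N) (t : ℕ → ℝ)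
    (ht0 : t 0 = 0) (htN : t N = T)
    (htmono : ∀ k < N, t k < t (k + 1))
    (a b c : ℕ → ℝ) (ζ : ℕ → ℕ → S → ℝ)
    (ha0 : ∀ k, 0 ≤ a k) (hb0 : ∀ k, 0 ≤ b k) (hc0 : ∀ k, 0 ≤ c k)
    (hζ0 : ∀ k ℓ x, 0 ≤ ζ k ℓ x)
    (hζm : ∀ k ℓ, Measurable (ζ k ℓ))
    {K : ℝ} (hK : 0 < K)
    (h1 : ∀ k < N,
      ENNReal.ofReal (a k) ≤ ENNReal.ofReal K *
        (ENNReal.ofReal (b k)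
          + ENNReal.ofReal (∑ ℓ ∈ Finset.Ico (k + 1) N, (t (ℓ + 1) - t ℓ) * a ℓ)
          + ∫⁻ x, ENNReal.ofReal
              ((∑ ℓ ∈ Finset.Ico (k + 1) N, (t (ℓ + 1) - t ℓ) * ζ ℓ k x) ^ 2) ∂μ))
    (h2 : ∀ k, 1 ≤ k → k < N →
      (∫⁻ x, ENNReal.ofReal
          (∑ ℓ ∈ Finset.range k, (t (ℓ + 1) - t ℓ) * (ζ k ℓ x) ^ 2) ∂μ)
        ≤ ENNReal.ofReal (K * (a k + c k)))
    :
    (∑ k ∈ Finset.range N, (t (k + 1) - t k) * a k)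
      ≤ (2 * K + 1) * Real.exp (2 * K * (1 + K) * T) *
          ∑ k ∈ Finset.range N, (t (k + 1) - t k) * (b k + c k) := by
  obtain ⟨γ, hγdef⟩ : ∃ γ : ℝ, γ = 2 * K * (1 + K) := ⟨_, rfl⟩
  rw [← hγdef]
  have hγ : 0 < γ := by rw [hγdef]; nlinarith
  -- monotonicity of t
  have htm : ∀ i j : ℕ, i ≤ j → j ≤ N → t i ≤ t j := by
    intro i j hij hjN
    induction j with
    | zero => simp [Nat.le_zero.mp hij]
    | succ n ih =>
      rcases Nat.eq_or_lt_of_le hij with h | h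
      · exact h ▸ le_rfl
      · exact le_trans (ih (by omega) (by omega)) (le_of_lt (htmono n (by omega)))
  have ht0' : ∀ k, k ≤ N → 0 ≤ t k := fun k hk => by
    rw [← ht0]; exact htm 0 k (Nat.zero_le _) hk
  have htT : ∀ k, k ≤ N → t k ≤ T := fun k hk => by
    rw [← htN]; exact htm k N hk le_rfl
  have hD : ∀ k, k < N → 0 < t (k+1) - t k := fun k hk => sub_pos.mpr (htmono k hk)
  obtain ⟨E, hEdef⟩ : ∃ E : ℕ → ℝ, E = fun k => Real.exp (γ * t k) := ⟨_, rfl⟩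
  obtain ⟨ω, hωdef⟩ : ∃ ω : ℕ → ℝ, ω = fun k => E (k+1) - E k := ⟨_, rfl⟩
  have hE1 : ∀ k, k ≤ N → 1 ≤ E k := fun k hk => by
    simp only [hEdef]
    exact Real.one_le_exp (mul_nonneg hγ.le (ht0' k hk))
  have hωlb : ∀ k, k < N → γ * (t (k+1) - t k) * E k ≤ ω k := fun k hk => by
    simp only [hωdef, hEdef]
    exact exp_sub_ge γ (t k) (t (k+1)) (htmono k hk).le
  have hωub : ∀ k, k < N → ω k ≤ γ * (t (k+1) - t k) * E (k+1) := fun k hk => by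
    simp only [hωdef, hEdef]
    exact exp_sub_le γ (t k) (t (k+1)) (htmono k hk).le
  have hDlow : ∀ k, k < N → γ * (t (k+1) - t k) ≤ ω k := by
    intro k hk
    have h1' := hωlb k hk
    have h2' := hE1 k hk.le
    have h3' := mul_pos hγ (hD k hk)
    have h4' := mul_le_mul_of_nonneg_left h2' h3'.le
    linarith
  have hωpos : ∀ k, k < N → 0 < ω k := by
    intro k hk
    have h1' := hDlow k hk
    have h3' := mul_pos hγ (hD k hk)
    linarith
  -- the Cauchy–Schwarz denominators
  have hψ : ∀ k, k < N → (γ * (t (k+1) - t k))^2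
      ≤ ω k * (Real.exp (-(γ * t k)) - Real.exp (-(γ * t (k+1)))) := by
    intro k hk
    simp only [hωdef, hEdef]
    exact sq_le_exp_mul γ (t k) (t (k+1)) hγ.le (htmono k hk).le
  have hψsum : ∀ k, k < N →
      ∑ ℓ ∈ Finset.Ico (k+1) N, (Real.exp (-(γ * t ℓ)) - Real.exp (-(γ * t (ℓ+1))))
        ≤ Real.exp (-(γ * t (k+1))) := by
    intro k hk
    rw [Finset.sum_Ico_eq_sub _ (show k+1 ≤ N by omega),
      Finset.sum_range_sub' (fun ℓ => Real.exp (-(γ * t ℓ))),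
      Finset.sum_range_sub' (fun ℓ => Real.exp (-(γ * t ℓ)))]
    have := Real.exp_pos (-(γ * t N))
    linarith
  -- pointwise Cauchy–Schwarz
  have hCS : ∀ k, k < N → ∀ x : S,
      (∑ ℓ ∈ Finset.Ico (k+1) N, (t (ℓ+1) - t ℓ) * ζ ℓ k x)^2
        ≤ (Real.exp (-(γ * t (k+1))) / γ^2)
            * ∑ ℓ ∈ Finset.Ico (k+1) N, ω ℓ * (ζ ℓ k x)^2 := by
    intro k hk x
    have hmem : ∀ ℓ ∈ Finset.Ico (k+1) N, ℓ < N := fun ℓ hℓ => (Finset.mem_Ico.mp hℓ).2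
    have cs := Finset.sum_mul_sq_le_sq_mul_sq (Finset.Ico (k+1) N)
        (fun ℓ => (t (ℓ+1) - t ℓ) / Real.sqrt (ω ℓ)) (fun ℓ => Real.sqrt (ω ℓ) * ζ ℓ k x)
    have e1 : ∑ ℓ ∈ Finset.Ico (k+1) N,
        ((t (ℓ+1) - t ℓ) / Real.sqrt (ω ℓ)) * (Real.sqrt (ω ℓ) * ζ ℓ k x)
        = ∑ ℓ ∈ Finset.Ico (k+1) N, (t (ℓ+1) - t ℓ) * ζ ℓ k x := by
      apply Finset.sum_congr rfl
      intro ℓ hℓ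
      have h := hωpos ℓ (hmem ℓ hℓ)
      have hs : Real.sqrt (ω ℓ) ≠ 0 := (Real.sqrt_pos.mpr h).ne'
      field_simp
    rw [e1] at cs
    have hg2 : 0 ≤ ∑ ℓ ∈ Finset.Ico (k+1) N, (Real.sqrt (ω ℓ) * ζ ℓ k x)^2 :=
      Finset.sum_nonneg fun ℓ _ => sq_nonneg _
    have e2 : ∑ ℓ ∈ Finset.Ico (k+1) N, ((t (ℓ+1) - t ℓ) / Real.sqrt (ω ℓ))^2
        ≤ Real.exp (-(γ * t (k+1))) / γ^2 := by
      calc ∑ ℓ ∈ Finset.Ico (k+1) N, ((t (ℓ+1) - t ℓ) / Real.sqrt (ω ℓ))^2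
          ≤ ∑ ℓ ∈ Finset.Ico (k+1) N,
              (Real.exp (-(γ * t ℓ)) - Real.exp (-(γ * t (ℓ+1)))) / γ^2 := by
            apply Finset.sum_le_sum
            intro ℓ hℓ
            have hωp := hωpos ℓ (hmem ℓ hℓ)
            rw [div_pow, Real.sq_sqrt hωp.le, div_le_div_iff₀ hωp (pow_pos hγ 2)]
            have := hψ ℓ (hmem ℓ hℓ)
            nlinarith
        _ = (∑ ℓ ∈ Finset.Ico (k+1) N,
              (Real.exp (-(γ * t ℓ)) - Real.exp (-(γ * t (ℓ+1))))) / γ^2 := by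
            rw [Finset.sum_div]
        _ ≤ Real.exp (-(γ * t (k+1))) / γ^2 :=
            (div_le_div_iff_of_pos_right (pow_pos hγ 2)).mpr (hψsum k hk)
    have e3 : ∀ ℓ ∈ Finset.Ico (k+1) N,
        (Real.sqrt (ω ℓ) * ζ ℓ k x)^2 = ω ℓ * (ζ ℓ k x)^2 := by
      intro ℓ hℓ
      rw [mul_pow, Real.sq_sqrt (hωpos ℓ (hmem ℓ hℓ)).le]
    calc (∑ ℓ ∈ Finset.Ico (k+1) N, (t (ℓ+1) - t ℓ) * ζ ℓ k x)^2
        ≤ (∑ ℓ ∈ Finset.Ico (k+1) N, ((t (ℓ+1) - t ℓ) / Real.sqrt (ω ℓ))^2)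
            * ∑ ℓ ∈ Finset.Ico (k+1) N, (Real.sqrt (ω ℓ) * ζ ℓ k x)^2 := cs
      _ ≤ (Real.exp (-(γ * t (k+1))) / γ^2)
            * ∑ ℓ ∈ Finset.Ico (k+1) N, (Real.sqrt (ω ℓ) * ζ ℓ k x)^2 :=
          mul_le_mul_of_nonneg_right e2 hg2
      _ = (Real.exp (-(γ * t (k+1))) / γ^2)
            * ∑ ℓ ∈ Finset.Ico (k+1) N, ω ℓ * (ζ ℓ k x)^2 := by
          rw [Finset.sum_congr rfl e3]
  -- measurability
  have hmZ : ∀ ℓ k, Measurable fun x => ENNReal.ofReal ((ζ ℓ k x)^2) :=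
    fun ℓ k => ((hζm ℓ k).pow_const 2).ennreal_ofReal
  -- the ENNReal squared integrals
  obtain ⟨Z, hZdef⟩ : ∃ Z : ℕ → ℕ → ENNReal,
      Z = fun ℓ k => ∫⁻ x, ENNReal.ofReal ((ζ ℓ k x)^2) ∂μ := ⟨_, rfl⟩
  -- F1 : weighted Cauchy-Schwarz for the lintegral
  have hF1 : ∀ k, k < N →
      (∫⁻ x, ENNReal.ofReal ((∑ ℓ ∈ Finset.Ico (k+1) N, (t (ℓ+1) - t ℓ) * ζ ℓ k x)^2) ∂μ)
        ≤ ENNReal.ofReal (Real.exp (-(γ * t (k+1))) / γ^2)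
            * ∑ ℓ ∈ Finset.Ico (k+1) N, ENNReal.ofReal (ω ℓ) * Z ℓ k := by
    intro k hk
    have hc : 0 ≤ Real.exp (-(γ * t (k+1))) / γ^2 := div_nonneg (Real.exp_pos _).le (sq_nonneg γ)
    have step1 : (∫⁻ x, ENNReal.ofReal
        ((∑ ℓ ∈ Finset.Ico (k+1) N, (t (ℓ+1) - t ℓ) * ζ ℓ k x)^2) ∂μ)
        ≤ ∫⁻ x, ENNReal.ofReal ((Real.exp (-(γ * t (k+1))) / γ^2)
            * ∑ ℓ ∈ Finset.Ico (k+1) N, ω ℓ * (ζ ℓ k x)^2) ∂μ :=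
      lintegral_mono fun x => ENNReal.ofReal_le_ofReal (hCS k hk x)
    have step2 : ∀ x : S, ENNReal.ofReal ((Real.exp (-(γ * t (k+1))) / γ^2)
            * ∑ ℓ ∈ Finset.Ico (k+1) N, ω ℓ * (ζ ℓ k x)^2)
        = ENNReal.ofReal (Real.exp (-(γ * t (k+1))) / γ^2)
            * ∑ ℓ ∈ Finset.Ico (k+1) N,
                ENNReal.ofReal (ω ℓ) * ENNReal.ofReal ((ζ ℓ k x)^2) := by
      intro x
      rw [ENNReal.ofReal_mul hc,
        ENNReal.ofReal_sum_of_nonneg (fun ℓ hℓ =>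
          mul_nonneg (hωpos ℓ (Finset.mem_Ico.mp hℓ).2).le (sq_nonneg _))]
      congr 1
      exact Finset.sum_congr rfl fun ℓ hℓ =>
        ENNReal.ofReal_mul (hωpos ℓ (Finset.mem_Ico.mp hℓ).2).le
    calc (∫⁻ x, ENNReal.ofReal
        ((∑ ℓ ∈ Finset.Ico (k+1) N, (t (ℓ+1) - t ℓ) * ζ ℓ k x)^2) ∂μ)
        ≤ ∫⁻ x, ENNReal.ofReal ((Real.exp (-(γ * t (k+1))) / γ^2)
            * ∑ ℓ ∈ Finset.Ico (k+1) N, ω ℓ * (ζ ℓ k x)^2) ∂μ := step1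
      _ = ∫⁻ x, ENNReal.ofReal (Real.exp (-(γ * t (k+1))) / γ^2)
            * ∑ ℓ ∈ Finset.Ico (k+1) N,
                ENNReal.ofReal (ω ℓ) * ENNReal.ofReal ((ζ ℓ k x)^2) ∂μ := by
          simp_rw [step2]
      _ = ENNReal.ofReal (Real.exp (-(γ * t (k+1))) / γ^2)
            * ∫⁻ x, ∑ ℓ ∈ Finset.Ico (k+1) N,
                ENNReal.ofReal (ω ℓ) * ENNReal.ofReal ((ζ ℓ k x)^2) ∂μ :=
          lintegral_const_mul' _ _ ENNReal.ofReal_ne_top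
      _ = ENNReal.ofReal (Real.exp (-(γ * t (k+1))) / γ^2)
            * ∑ ℓ ∈ Finset.Ico (k+1) N, ENNReal.ofReal (ω ℓ) * Z ℓ k := by
          rw [lintegral_finset_sum _ (fun ℓ _ => (hmZ ℓ k).const_mul _)]
          congr 1
          refine Finset.sum_congr rfl fun ℓ _ => ?_
          simp only [hZdef]
          exact lintegral_const_mul' _ _ ENNReal.ofReal_ne_top
  -- F2 : hypothesis (ii) reformulated
  have hF2 : ∀ ℓ, ℓ < N →
      ∑ k ∈ Finset.range ℓ, ENNReal.ofReal (t (k+1) - t k) * Z ℓ k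
        ≤ ENNReal.ofReal (K * (a ℓ + c ℓ)) := by
    intro ℓ hℓ
    simp only [hZdef]
    rcases Nat.eq_zero_or_pos ℓ with h0 | h0
    · simp [h0]
    · have heq : ∑ k ∈ Finset.range ℓ, ENNReal.ofReal (t (k+1) - t k)
            * ∫⁻ x, ENNReal.ofReal ((ζ ℓ k x)^2) ∂μ
          = ∫⁻ x, ENNReal.ofReal
              (∑ k ∈ Finset.range ℓ, (t (k+1) - t k) * (ζ ℓ k x)^2) ∂μ := by
        have hpt : ∀ x : S, ENNReal.ofReal
            (∑ k ∈ Finset.range ℓ, (t (k+1) - t k) * (ζ ℓ k x)^2)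
            = ∑ k ∈ Finset.range ℓ,
                ENNReal.ofReal (t (k+1) - t k) * ENNReal.ofReal ((ζ ℓ k x)^2) := by
          intro x
          rw [ENNReal.ofReal_sum_of_nonneg (fun k hk =>
            mul_nonneg (hD k (by simp only [Finset.mem_range] at hk; omega)).le (sq_nonneg _))]
          exact Finset.sum_congr rfl fun k hk =>
            ENNReal.ofReal_mul (hD k (by simp only [Finset.mem_range] at hk; omega)).le
        simp_rw [hpt]
        rw [lintegral_finset_sum _ (fun k _ => (hmZ ℓ k).const_mul _)]
        exact Finset.sum_congr rfl fun k _ =>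
          (lintegral_const_mul' _ _ ENNReal.ofReal_ne_top).symm
      rw [heq]
      exact h2 ℓ h0 hℓ
  -- real estimate for the middle term
  have hS2 : ∑ k ∈ Finset.range N,
      ω k * (∑ ℓ ∈ Finset.Ico (k+1) N, (t (ℓ+1) - t ℓ) * a ℓ)
      ≤ (1/γ) * ∑ ℓ ∈ Finset.range N, ω ℓ * a ℓ := by
    calc ∑ k ∈ Finset.range N,
          ω k * (∑ ℓ ∈ Finset.Ico (k+1) N, (t (ℓ+1) - t ℓ) * a ℓ)
        = ∑ k ∈ Finset.range N, ∑ ℓ ∈ Finset.Ico (k+1) N,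
            ω k * ((t (ℓ+1) - t ℓ) * a ℓ) := by
          exact Finset.sum_congr rfl fun k _ => Finset.mul_sum _ _ _
      _ = ∑ ℓ ∈ Finset.range N, ∑ k ∈ Finset.range ℓ,
            ω k * ((t (ℓ+1) - t ℓ) * a ℓ) :=
          sum_triangle_comm N _
      _ = ∑ ℓ ∈ Finset.range N, (∑ k ∈ Finset.range ℓ, ω k) * ((t (ℓ+1) - t ℓ) * a ℓ) := by
          exact Finset.sum_congr rfl fun ℓ _ => (Finset.sum_mul _ _ _).symm
      _ ≤ ∑ ℓ ∈ Finset.range N, (1/γ) * (ω ℓ * a ℓ) := by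
          apply Finset.sum_le_sum
          intro ℓ hℓ
          simp only [Finset.mem_range] at hℓ
          have hsum : ∑ k ∈ Finset.range ℓ, ω k = E ℓ - E 0 := by
            simp only [hωdef]
            exact Finset.sum_range_sub E ℓ
          have hE0 : E 0 = 1 := by simp only [hEdef]; rw [ht0]; simp
          have h1' := hωlb ℓ hℓ
          have h2' := hE1 ℓ hℓ.le
          have h3' := hD ℓ hℓ
          have h4' := ha0 ℓ
          have hEa : E ℓ * ((t (ℓ+1) - t ℓ) * a ℓ) ≤ (ω ℓ * a ℓ) / γ := by
            rw [le_div_iff₀ hγ]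
            nlinarith [mul_le_mul_of_nonneg_right h1' h4']
          rw [hsum, hE0]
          have h5' : 0 ≤ (t (ℓ+1) - t ℓ) * a ℓ := mul_nonneg h3'.le h4'
          calc (E ℓ - 1) * ((t (ℓ+1) - t ℓ) * a ℓ)
              ≤ E ℓ * ((t (ℓ+1) - t ℓ) * a ℓ) := by nlinarith
            _ ≤ (ω ℓ * a ℓ) / γ := hEa
            _ = (1/γ) * (ω ℓ * a ℓ) := by ring
      _ = (1/γ) * ∑ ℓ ∈ Finset.range N, ω ℓ * a ℓ := (Finset.mul_sum _ _ _).symm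
  -- the weight times the CS constant
  have hS3k : ∀ k, k < N →
      ω k * (Real.exp (-(γ * t (k+1))) / γ^2) ≤ (t (k+1) - t k) * (1/γ) := by
    intro k hk
    have h1' := hωub k hk
    have h2' : E (k+1) * Real.exp (-(γ * t (k+1))) = 1 := by
      simp only [hEdef]; rw [← Real.exp_add]; norm_num
    have h3' : (0:ℝ) < Real.exp (-(γ * t (k+1))) := Real.exp_pos _
    have h4' : 0 ≤ Real.exp (-(γ * t (k+1))) / γ^2 := div_nonneg (Real.exp_pos _).le (sq_nonneg γ)
    calc ω k * (Real.exp (-(γ * t (k+1))) / γ^2)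
        ≤ (γ * (t (k+1) - t k) * E (k+1)) * (Real.exp (-(γ * t (k+1))) / γ^2) :=
          mul_le_mul_of_nonneg_right h1' h4'
      _ = (γ * (t (k+1) - t k)) * (E (k+1) * Real.exp (-(γ * t (k+1)))) / γ^2 := by ring
      _ = (t (k+1) - t k) * (1/γ) := by
          rw [h2', mul_one, mul_one_div, sq, mul_div_mul_left _ _ hγ.ne']
  have h1γ : (0:ℝ) ≤ 1/γ := by
    rw [one_div]
    exact inv_nonneg.mpr hγ.le
  -- expand ofReal of weighted sums
  have expand : ∀ (f : ℕ → ℝ), (∀ k, 0 ≤ f k) →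
      ENNReal.ofReal (∑ k ∈ Finset.range N, ω k * f k)
        = ∑ k ∈ Finset.range N, ENNReal.ofReal (ω k) * ENNReal.ofReal (f k) := by
    intro f hf
    rw [ENNReal.ofReal_sum_of_nonneg (fun k hk =>
      mul_nonneg (hωpos k (Finset.mem_range.mp hk)).le (hf k))]
    exact Finset.sum_congr rfl fun k hk =>
      ENNReal.ofReal_mul (hωpos k (Finset.mem_range.mp hk)).le
  have htail0 : ∀ k, 0 ≤ ∑ ℓ ∈ Finset.Ico (k+1) N, (t (ℓ+1) - t ℓ) * a ℓ := by
    intro k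
    exact Finset.sum_nonneg fun ℓ hℓ =>
      mul_nonneg (hD ℓ (Finset.mem_Ico.mp hℓ).2).le (ha0 ℓ)
  -- per-k bound from (i), multiplied by the weight
  have hstep : ∀ k ∈ Finset.range N,
      ENNReal.ofReal (ω k) * ENNReal.ofReal (a k)
        ≤ ENNReal.ofReal K * (ENNReal.ofReal (ω k) * ENNReal.ofReal (b k))
          + ENNReal.ofReal K * (ENNReal.ofReal (ω k)
              * ENNReal.ofReal (∑ ℓ ∈ Finset.Ico (k+1) N, (t (ℓ+1) - t ℓ) * a ℓ))
          + ENNReal.ofReal K * (ENNReal.ofReal (ω k)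
              * ∫⁻ x, ENNReal.ofReal
                  ((∑ ℓ ∈ Finset.Ico (k+1) N, (t (ℓ+1) - t ℓ) * ζ ℓ k x)^2) ∂μ) := by
    intro k hk
    simp only [Finset.mem_range] at hk
    calc ENNReal.ofReal (ω k) * ENNReal.ofReal (a k)
        ≤ ENNReal.ofReal (ω k) * (ENNReal.ofReal K *
            (ENNReal.ofReal (b k)
              + ENNReal.ofReal (∑ ℓ ∈ Finset.Ico (k+1) N, (t (ℓ+1) - t ℓ) * a ℓ)
              + ∫⁻ x, ENNReal.ofReal
                  ((∑ ℓ ∈ Finset.Ico (k+1) N, (t (ℓ+1) - t ℓ) * ζ ℓ k x)^2) ∂μ)) :=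
          mul_le_mul_right (h1 k hk) _
      _ = ENNReal.ofReal K * (ENNReal.ofReal (ω k) * ENNReal.ofReal (b k))
          + ENNReal.ofReal K * (ENNReal.ofReal (ω k)
              * ENNReal.ofReal (∑ ℓ ∈ Finset.Ico (k+1) N, (t (ℓ+1) - t ℓ) * a ℓ))
          + ENNReal.ofReal K * (ENNReal.ofReal (ω k)
              * ∫⁻ x, ENNReal.ofReal
                  ((∑ ℓ ∈ Finset.Ico (k+1) N, (t (ℓ+1) - t ℓ) * ζ ℓ k x)^2) ∂μ) := by
          ring
  -- bound for the integral part
  have hIpart : ∑ k ∈ Finset.range N, ENNReal.ofReal (ω k)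
        * (∫⁻ x, ENNReal.ofReal
            ((∑ ℓ ∈ Finset.Ico (k+1) N, (t (ℓ+1) - t ℓ) * ζ ℓ k x)^2) ∂μ)
      ≤ ENNReal.ofReal ((1/γ) * ∑ ℓ ∈ Finset.range N, ω ℓ * (K * (a ℓ + c ℓ))) := by
    have perk : ∀ k ∈ Finset.range N,
        ENNReal.ofReal (ω k) * (∫⁻ x, ENNReal.ofReal
            ((∑ ℓ ∈ Finset.Ico (k+1) N, (t (ℓ+1) - t ℓ) * ζ ℓ k x)^2) ∂μ)
          ≤ ENNReal.ofReal (1/γ) * ∑ ℓ ∈ Finset.Ico (k+1) N,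
              ENNReal.ofReal (t (k+1) - t k) * (ENNReal.ofReal (ω ℓ) * Z ℓ k) := by
      intro k hk
      simp only [Finset.mem_range] at hk
      calc ENNReal.ofReal (ω k) * (∫⁻ x, ENNReal.ofReal
            ((∑ ℓ ∈ Finset.Ico (k+1) N, (t (ℓ+1) - t ℓ) * ζ ℓ k x)^2) ∂μ)
          ≤ ENNReal.ofReal (ω k) * (ENNReal.ofReal (Real.exp (-(γ * t (k+1))) / γ^2)
              * ∑ ℓ ∈ Finset.Ico (k+1) N, ENNReal.ofReal (ω ℓ) * Z ℓ k) :=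
            mul_le_mul_right (hF1 k hk) _
        _ = ENNReal.ofReal (ω k * (Real.exp (-(γ * t (k+1))) / γ^2))
              * ∑ ℓ ∈ Finset.Ico (k+1) N, ENNReal.ofReal (ω ℓ) * Z ℓ k := by
            rw [ENNReal.ofReal_mul (hωpos k hk).le]
            ring
        _ ≤ ENNReal.ofReal ((t (k+1) - t k) * (1/γ))
              * ∑ ℓ ∈ Finset.Ico (k+1) N, ENNReal.ofReal (ω ℓ) * Z ℓ k :=
            mul_le_mul_left (ENNReal.ofReal_le_ofReal (hS3k k hk)) _
        _ = (ENNReal.ofReal (t (k+1) - t k) * ENNReal.ofReal (1/γ))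
              * ∑ ℓ ∈ Finset.Ico (k+1) N, ENNReal.ofReal (ω ℓ) * Z ℓ k := by
            rw [ENNReal.ofReal_mul (hD k hk).le]
        _ = ENNReal.ofReal (1/γ) * (ENNReal.ofReal (t (k+1) - t k)
              * ∑ ℓ ∈ Finset.Ico (k+1) N, ENNReal.ofReal (ω ℓ) * Z ℓ k) := by
            ring
        _ = ENNReal.ofReal (1/γ) * ∑ ℓ ∈ Finset.Ico (k+1) N,
              ENNReal.ofReal (t (k+1) - t k) * (ENNReal.ofReal (ω ℓ) * Z ℓ k) := by
            rw [Finset.mul_sum]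
    calc ∑ k ∈ Finset.range N, ENNReal.ofReal (ω k)
          * (∫⁻ x, ENNReal.ofReal
              ((∑ ℓ ∈ Finset.Ico (k+1) N, (t (ℓ+1) - t ℓ) * ζ ℓ k x)^2) ∂μ)
        ≤ ∑ k ∈ Finset.range N, ENNReal.ofReal (1/γ) * ∑ ℓ ∈ Finset.Ico (k+1) N,
            ENNReal.ofReal (t (k+1) - t k) * (ENNReal.ofReal (ω ℓ) * Z ℓ k) :=
          Finset.sum_le_sum perk
      _ = ENNReal.ofReal (1/γ) * ∑ k ∈ Finset.range N, ∑ ℓ ∈ Finset.Ico (k+1) N,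
            ENNReal.ofReal (t (k+1) - t k) * (ENNReal.ofReal (ω ℓ) * Z ℓ k) :=
          (Finset.mul_sum _ _ _).symm
      _ = ENNReal.ofReal (1/γ) * ∑ ℓ ∈ Finset.range N, ∑ k ∈ Finset.range ℓ,
            ENNReal.ofReal (t (k+1) - t k) * (ENNReal.ofReal (ω ℓ) * Z ℓ k) := by
          rw [sum_triangle_comm N (fun k ℓ =>
            ENNReal.ofReal (t (k+1) - t k) * (ENNReal.ofReal (ω ℓ) * Z ℓ k))]
      _ = ENNReal.ofReal (1/γ) * ∑ ℓ ∈ Finset.range N,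
            ENNReal.ofReal (ω ℓ) * ∑ k ∈ Finset.range ℓ,
              ENNReal.ofReal (t (k+1) - t k) * Z ℓ k := by
          congr 1
          refine Finset.sum_congr rfl fun ℓ _ => ?_
          rw [Finset.mul_sum]
          exact Finset.sum_congr rfl fun k _ => by ring
      _ ≤ ENNReal.ofReal (1/γ) * ∑ ℓ ∈ Finset.range N,
            ENNReal.ofReal (ω ℓ) * ENNReal.ofReal (K * (a ℓ + c ℓ)) :=
          mul_le_mul_right (Finset.sum_le_sum fun ℓ hℓ =>
            mul_le_mul_right (hF2 ℓ (Finset.mem_range.mp hℓ)) _) _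
      _ = ENNReal.ofReal (1/γ)
            * ENNReal.ofReal (∑ ℓ ∈ Finset.range N, ω ℓ * (K * (a ℓ + c ℓ))) := by
          rw [expand (fun ℓ => K * (a ℓ + c ℓ)) (fun ℓ =>
            mul_nonneg hK.le (add_nonneg (ha0 ℓ) (hc0 ℓ)))]
      _ = ENNReal.ofReal ((1/γ) * ∑ ℓ ∈ Finset.range N, ω ℓ * (K * (a ℓ + c ℓ))) :=
          (ENNReal.ofReal_mul h1γ).symm
  -- nonnegativity of the various sums
  have hWnn : 0 ≤ ∑ k ∈ Finset.range N, ω k * a k :=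
    Finset.sum_nonneg fun k hk =>
      mul_nonneg (hωpos k (Finset.mem_range.mp hk)).le (ha0 k)
  have hBnn : 0 ≤ ∑ k ∈ Finset.range N, ω k * b k :=
    Finset.sum_nonneg fun k hk =>
      mul_nonneg (hωpos k (Finset.mem_range.mp hk)).le (hb0 k)
  have hCnn : 0 ≤ ∑ k ∈ Finset.range N, ω k * c k :=
    Finset.sum_nonneg fun k hk =>
      mul_nonneg (hωpos k (Finset.mem_range.mp hk)).le (hc0 k)
  have hACnn : 0 ≤ ∑ ℓ ∈ Finset.range N, ω ℓ * (K * (a ℓ + c ℓ)) :=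
    Finset.sum_nonneg fun ℓ hℓ =>
      mul_nonneg (hωpos ℓ (Finset.mem_range.mp hℓ)).le
        (mul_nonneg hK.le (add_nonneg (ha0 ℓ) (hc0 ℓ)))
  -- the master ENNReal inequality
  have hsum1 : ENNReal.ofReal (∑ k ∈ Finset.range N, ω k * a k)
      ≤ ENNReal.ofReal K * ENNReal.ofReal (∑ k ∈ Finset.range N, ω k * b k)
        + ENNReal.ofReal K
            * ENNReal.ofReal ((1/γ) * ∑ k ∈ Finset.range N, ω k * a k)
        + ENNReal.ofReal K
            * ENNReal.ofReal ((1/γ) * ∑ ℓ ∈ Finset.range N, ω ℓ * (K * (a ℓ + c ℓ))) := by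
    calc ENNReal.ofReal (∑ k ∈ Finset.range N, ω k * a k)
        = ∑ k ∈ Finset.range N, ENNReal.ofReal (ω k) * ENNReal.ofReal (a k) :=
          expand a ha0
      _ ≤ ∑ k ∈ Finset.range N,
            (ENNReal.ofReal K * (ENNReal.ofReal (ω k) * ENNReal.ofReal (b k))
            + ENNReal.ofReal K * (ENNReal.ofReal (ω k)
                * ENNReal.ofReal (∑ ℓ ∈ Finset.Ico (k+1) N, (t (ℓ+1) - t ℓ) * a ℓ))
            + ENNReal.ofReal K * (ENNReal.ofReal (ω k)
                * ∫⁻ x, ENNReal.ofReal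
                    ((∑ ℓ ∈ Finset.Ico (k+1) N, (t (ℓ+1) - t ℓ) * ζ ℓ k x)^2) ∂μ)) :=
          Finset.sum_le_sum hstep
      _ = ENNReal.ofReal K
              * ∑ k ∈ Finset.range N, ENNReal.ofReal (ω k) * ENNReal.ofReal (b k)
          + ENNReal.ofReal K * ∑ k ∈ Finset.range N, ENNReal.ofReal (ω k)
              * ENNReal.ofReal (∑ ℓ ∈ Finset.Ico (k+1) N, (t (ℓ+1) - t ℓ) * a ℓ)
          + ENNReal.ofReal K * ∑ k ∈ Finset.range N, ENNReal.ofReal (ω k)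
              * ∫⁻ x, ENNReal.ofReal
                  ((∑ ℓ ∈ Finset.Ico (k+1) N, (t (ℓ+1) - t ℓ) * ζ ℓ k x)^2) ∂μ := by
          rw [Finset.sum_add_distrib, Finset.sum_add_distrib,
            ← Finset.mul_sum, ← Finset.mul_sum, ← Finset.mul_sum]
      _ ≤ ENNReal.ofReal K * ENNReal.ofReal (∑ k ∈ Finset.range N, ω k * b k)
          + ENNReal.ofReal K
              * ENNReal.ofReal ((1/γ) * ∑ k ∈ Finset.range N, ω k * a k)
          + ENNReal.ofReal K
              * ENNReal.ofReal ((1/γ)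
                  * ∑ ℓ ∈ Finset.range N, ω ℓ * (K * (a ℓ + c ℓ))) := by
          refine add_le_add (add_le_add ?_ ?_) ?_
          · exact le_of_eq (congrArg _ (expand b hb0).symm)
          · apply mul_le_mul_right
            calc ∑ k ∈ Finset.range N, ENNReal.ofReal (ω k)
                  * ENNReal.ofReal (∑ ℓ ∈ Finset.Ico (k+1) N, (t (ℓ+1) - t ℓ) * a ℓ)
                = ENNReal.ofReal (∑ k ∈ Finset.range N,
                    ω k * ∑ ℓ ∈ Finset.Ico (k+1) N, (t (ℓ+1) - t ℓ) * a ℓ) :=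
                  (expand _ htail0).symm
              _ ≤ ENNReal.ofReal ((1/γ) * ∑ k ∈ Finset.range N, ω k * a k) :=
                  ENNReal.ofReal_le_ofReal hS2
          · exact mul_le_mul_right hIpart _
  -- convert to a real inequality
  have hx1 : 0 ≤ K * (∑ k ∈ Finset.range N, ω k * b k) := mul_nonneg hK.le hBnn
  have hx2 : 0 ≤ K * ((1/γ) * ∑ k ∈ Finset.range N, ω k * a k) :=
    mul_nonneg hK.le (mul_nonneg h1γ hWnn)
  have hx3 : 0 ≤ K * ((1/γ) * ∑ ℓ ∈ Finset.range N, ω ℓ * (K * (a ℓ + c ℓ))) :=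
    mul_nonneg hK.le (mul_nonneg h1γ hACnn)
  rw [← ENNReal.ofReal_mul hK.le, ← ENNReal.ofReal_mul hK.le,
    ← ENNReal.ofReal_mul hK.le, ← ENNReal.ofReal_add hx1 hx2,
    ← ENNReal.ofReal_add (add_nonneg hx1 hx2) hx3] at hsum1
  have hreal := (ENNReal.ofReal_le_ofReal_iff
    (add_nonneg (add_nonneg hx1 hx2) hx3)).mp hsum1
  -- split the (a+c) sum
  have hACsplit : ∑ ℓ ∈ Finset.range N, ω ℓ * (K * (a ℓ + c ℓ))
      = K * (∑ k ∈ Finset.range N, ω k * a k) + K * (∑ k ∈ Finset.range N, ω k * c k) := by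
    rw [Finset.mul_sum, Finset.mul_sum, ← Finset.sum_add_distrib]
    exact Finset.sum_congr rfl fun ℓ _ => by ring
  rw [hACsplit] at hreal
  -- solve the linear inequality for the weighted sum
  have hKne : K ≠ 0 := hK.ne'
  have h1Kne : (1 + K) ≠ 0 := by nlinarith
  have hhalf : K * (1/γ) + K * (1/γ) * K = 1/2 := by
    rw [hγdef]; field_simp
  have hp2 : 0 ≤ K * (1/γ) * K := mul_nonneg (mul_nonneg hK.le h1γ) hK.le
  have hKdle : K * (1/γ) ≤ 1/2 := by linarith
  have h2q := mul_le_mul_of_nonneg_right hKdle hK.le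
  have hWcoef : K * (1/γ) * (∑ k ∈ Finset.range N, ω k * a k)
      + K * (1/γ) * K * (∑ k ∈ Finset.range N, ω k * a k)
      = (1/2) * (∑ k ∈ Finset.range N, ω k * a k) := by
    linear_combination (∑ k ∈ Finset.range N, ω k * a k) * hhalf
  have h2qC := mul_le_mul_of_nonneg_right h2q hCnn
  have hW2 : (∑ k ∈ Finset.range N, ω k * a k)
      ≤ 2*K*(∑ k ∈ Finset.range N, ω k * b k) + K*(∑ k ∈ Finset.range N, ω k * c k) := by
    nlinarith [hreal, hWcoef, h2qC]
  -- lower bound: unweighted sum ≤ (1/γ) * weighted sum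
  have hfin1 : (∑ k ∈ Finset.range N, (t (k+1) - t k) * a k)
      ≤ (1/γ) * ∑ k ∈ Finset.range N, ω k * a k := by
    rw [Finset.mul_sum]
    apply Finset.sum_le_sum
    intro k hk
    simp only [Finset.mem_range] at hk
    rw [one_div, inv_mul_eq_div, le_div_iff₀ hγ]
    nlinarith [mul_le_mul_of_nonneg_right (hDlow k hk) (ha0 k)]
  -- weighted sums of b and c bounded by unweighted ones
  have hg : ∀ (f : ℕ → ℝ), (∀ k, 0 ≤ f k) →
      (∑ k ∈ Finset.range N, ω k * f k)
        ≤ γ * Real.exp (γ * T) * ∑ k ∈ Finset.range N, (t (k+1) - t k) * f k := by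
    intro f hf
    rw [Finset.mul_sum]
    apply Finset.sum_le_sum
    intro k hk
    simp only [Finset.mem_range] at hk
    have hEle : E (k+1) ≤ Real.exp (γ * T) := by
      simp only [hEdef]
      exact Real.exp_le_exp.mpr (mul_le_mul_of_nonneg_left (htT (k+1) hk) hγ.le)
    have h1' := mul_le_mul_of_nonneg_right (hωub k hk) (hf k)
    have h2' : 0 ≤ γ * (t (k+1) - t k) * f k :=
      mul_nonneg (mul_nonneg hγ.le (hD k hk).le) (hf k)
    nlinarith [mul_le_mul_of_nonneg_left hEle h2']
  have hgb := hg b hb0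
  have hgc := hg c hc0
  have hPnn : 0 ≤ ∑ k ∈ Finset.range N, (t (k+1) - t k) * b k :=
    Finset.sum_nonneg fun k hk =>
      mul_nonneg (hD k (Finset.mem_range.mp hk)).le (hb0 k)
  have hQnn : 0 ≤ ∑ k ∈ Finset.range N, (t (k+1) - t k) * c k :=
    Finset.sum_nonneg fun k hk =>
      mul_nonneg (hD k (Finset.mem_range.mp hk)).le (hc0 k)
  have hsplit : ∑ k ∈ Finset.range N, (t (k+1) - t k) * (b k + c k)
      = (∑ k ∈ Finset.range N, (t (k+1) - t k) * b k)
        + ∑ k ∈ Finset.range N, (t (k+1) - t k) * c k := by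
    rw [← Finset.sum_add_distrib]
    exact Finset.sum_congr rfl fun k _ => by ring
  have hexp : (0:ℝ) < Real.exp (γ * T) := Real.exp_pos _
  calc (∑ k ∈ Finset.range N, (t (k+1) - t k) * a k)
      ≤ (1/γ) * ∑ k ∈ Finset.range N, ω k * a k := hfin1
    _ ≤ (1/γ) * (2*K*(∑ k ∈ Finset.range N, ω k * b k)
          + K*(∑ k ∈ Finset.range N, ω k * c k)) :=
        mul_le_mul_of_nonneg_left hW2 h1γ
    _ ≤ (1/γ) * (2*K*(γ * Real.exp (γ * T)
            * ∑ k ∈ Finset.range N, (t (k+1) - t k) * b k)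
          + K*(γ * Real.exp (γ * T)
            * ∑ k ∈ Finset.range N, (t (k+1) - t k) * c k)) := by
        apply mul_le_mul_of_nonneg_left _ h1γ
        have l1 := mul_le_mul_of_nonneg_left hgb (by linarith : (0:ℝ) ≤ 2*K)
        have l2 := mul_le_mul_of_nonneg_left hgc hK.le
        linarith
    _ = 2*K*Real.exp (γ * T) * (∑ k ∈ Finset.range N, (t (k+1) - t k) * b k)
        + K*Real.exp (γ * T) * ∑ k ∈ Finset.range N, (t (k+1) - t k) * c k := by
        field_simp
    _ ≤ (2*K+1)*Real.exp (γ * T) * (∑ k ∈ Finset.range N, (t (k+1) - t k) * b k)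
        + (2*K+1)*Real.exp (γ * T) * ∑ k ∈ Finset.range N, (t (k+1) - t k) * c k := by
        have m1 : 0 ≤ Real.exp (γ * T) * ∑ k ∈ Finset.range N, (t (k+1) - t k) * b k :=
          mul_nonneg hexp.le hPnn
        have m2 : 0 ≤ Real.exp (γ * T) * ∑ k ∈ Finset.range N, (t (k+1) - t k) * c k :=
          mul_nonneg hexp.le hQnn
        have m3 : 0 ≤ K * (Real.exp (γ * T) * ∑ k ∈ Finset.range N, (t (k+1) - t k) * c k) :=
          mul_nonneg hK.le m2
        nlinarith
    _ = (2*K+1) * Real.exp (γ * T)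
          * ∑ k ∈ Finset.range N, (t (k+1) - t k) * (b k + c k) := by
        rw [hsplit]; ring
end

section
/- For every γ > 0 one has Σ_{k=0}^{N−2} Γ_k ∫_S ( Σ_{ℓ=k+1}^{N−1} Δt_ℓ ζ_{ℓ,k}(x) )² dμ(x) ≤ (1/γ) · Σ_{k=1}^{N−1} Γ_k ∫_S Σ_{ℓ=0}^{k−1} Δt_ℓ ζ_{k,ℓ}(x)² dμ(x), where Γ_k := ∫_{t_k}^{t_{k+1}} e^{γ t} dt and both sides are interpreted as values in [0,∞]. (Key weighted kernel estimate in the proof of the discrete Gronwall-like inequality, Lemma 2.3, obtained via the Cauchy–Schwarz inequality and interchange of summation.) -/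
open MeasureTheory Set

noncomputable def Ew (γ : ℝ) (t : ℕ → ℝ) (k : ℕ) : ℝ :=
  (Real.exp (γ * t (k + 1)) - Real.exp (γ * t k)) / γ

noncomputable def Gw (γ : ℝ) (t : ℕ → ℝ) (k : ℕ) : ℝ :=
  (Real.exp (-γ * t k) - Real.exp (-γ * t (k + 1))) / γ

lemma quad_le (d : ℝ) (hd : 0 ≤ d) : d ^ 2 + 2 ≤ Real.exp d + Real.exp (-d) := by
  have hs : d / 2 ≤ Real.sinh (d / 2) := Real.self_le_sinh_iff.mpr (by linarith)
  have hs' : Real.sinh (d/2) = (Real.exp (d/2) - Real.exp (-(d/2))) / 2 := Real.sinh_eq _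
  have e1 : Real.exp (d/2) * Real.exp (d/2) = Real.exp d := by rw [← Real.exp_add]; ring_nf
  have e2 : Real.exp (-(d/2)) * Real.exp (-(d/2)) = Real.exp (-d) := by
    rw [← Real.exp_add]; ring_nf
  have e3 : Real.exp (d/2) * Real.exp (-(d/2)) = 1 := by rw [← Real.exp_add]; simp
  nlinarith [hs, hs', e1, e2, e3]

lemma sq_le_EG {γ : ℝ} (hγ : 0 < γ) (t : ℕ → ℝ) (ℓ : ℕ) (hab : t ℓ ≤ t (ℓ + 1)) :
    (t (ℓ + 1) - t ℓ) ^ 2 ≤ Ew γ t ℓ * Gw γ t ℓ := by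
  set a := t ℓ; set b := t (ℓ + 1)
  rw [Ew, Gw, div_mul_div_comm, le_div_iff₀ (by positivity)]
  have hB := quad_le (γ * (b - a)) (by nlinarith)
  have e1 : Real.exp (γ * b) * Real.exp (-γ * a) = Real.exp (γ * (b - a)) := by
    rw [← Real.exp_add]; ring_nf
  have e2 : Real.exp (γ * a) * Real.exp (-γ * b) = Real.exp (-(γ * (b - a))) := by
    rw [← Real.exp_add]; ring_nf
  have e3 : Real.exp (γ * a) * Real.exp (-γ * a) = 1 := by rw [← Real.exp_add]; simp
  have e4 : Real.exp (γ * b) * Real.exp (-γ * b) = 1 := by rw [← Real.exp_add]; simp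
  nlinarith [hB, e1, e2, e3, e4]

lemma E_le {γ : ℝ} (hγ : 0 < γ) {a b : ℝ} :
    (Real.exp (γ * b) - Real.exp (γ * a)) / γ ≤ (b - a) * Real.exp (γ * b) := by
  rw [div_le_iff₀ hγ]
  have h := Real.add_one_le_exp (-(γ * (b - a)))
  have e1 : Real.exp (γ * b) * Real.exp (-(γ * (b - a))) = Real.exp (γ * a) := by
    rw [← Real.exp_add]; ring_nf
  nlinarith [Real.exp_pos (γ * b)]

lemma E_nonneg {γ : ℝ} (hγ : 0 < γ) {t : ℕ → ℝ} {k : ℕ} (hab : t k ≤ t (k + 1)) :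
    0 ≤ Ew γ t k := by
  have h := Real.exp_le_exp.mpr (mul_le_mul_of_nonneg_left hab hγ.le)
  exact div_nonneg (by linarith) hγ.le

lemma G_pos {γ : ℝ} (hγ : 0 < γ) {t : ℕ → ℝ} {k : ℕ} (hab : t k < t (k + 1)) :
    0 < Gw γ t k := by
  have h : Real.exp (-γ * t (k + 1)) < Real.exp (-γ * t k) := by
    apply Real.exp_lt_exp.mpr; nlinarith
  exact div_pos (by linarith) hγ

lemma tele (γ : ℝ) (t : ℕ → ℝ) (m n : ℕ) (h : m ≤ n) :
    ∑ ℓ ∈ Finset.Ico m n, Gw γ t ℓ =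
      (Real.exp (-γ * t m) - Real.exp (-γ * t n)) / γ := by
  induction n, h using Nat.le_induction with
  | base => simp
  | succ n hmn ih => rw [Finset.sum_Ico_succ_top (by omega), ih, Gw]; ring

lemma perk {γ : ℝ} (hγ : 0 < γ) {N : ℕ} {t : ℕ → ℝ}
    (htmono : ∀ k < N, t k < t (k + 1)) {k : ℕ} (hk : k + 1 < N) (z : ℕ → ℝ) :
    Ew γ t k * (∑ ℓ ∈ Finset.Ico (k + 1) N, (t (ℓ + 1) - t ℓ) * z ℓ) ^ 2 ≤
      ∑ ℓ ∈ Finset.Ico (k + 1) N, ((t (k + 1) - t k) / γ) * (Ew γ t ℓ * z ℓ ^ 2) := by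
  set s := Finset.Ico (k + 1) N with hs
  have hlt : ∀ ℓ ∈ s, t ℓ < t (ℓ + 1) := fun ℓ hℓ =>
    htmono ℓ (Finset.mem_Ico.mp hℓ).2
  have httk : t k < t (k + 1) := htmono k (by omega)
  have hEk0 : 0 ≤ Ew γ t k := E_nonneg hγ httk.le
  have hGpos : ∀ ℓ ∈ s, 0 < Gw γ t ℓ := fun ℓ hℓ => G_pos hγ (hlt ℓ hℓ)
  have hE0 : ∀ ℓ ∈ s, 0 ≤ Ew γ t ℓ * z ℓ ^ 2 := fun ℓ hℓ =>
    mul_nonneg (E_nonneg hγ (hlt ℓ hℓ).le) (sq_nonneg _)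
  have hCS : (∑ ℓ ∈ s, (t (ℓ + 1) - t ℓ) * z ℓ) ^ 2 ≤
      (∑ ℓ ∈ s, Gw γ t ℓ) * ∑ ℓ ∈ s, ((t (ℓ + 1) - t ℓ) * z ℓ) ^ 2 / Gw γ t ℓ :=
    Finset.sum_sq_le_sum_mul_sum_of_sq_eq_mul s
      (fun ℓ hℓ => (hGpos ℓ hℓ).le)
      (fun ℓ hℓ => div_nonneg (sq_nonneg _) (hGpos ℓ hℓ).le)
      (fun ℓ hℓ => by rw [eq_comm, mul_comm (Gw γ t ℓ)]; exact div_mul_cancel₀ _ (hGpos ℓ hℓ).ne')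
  have hterm : ∑ ℓ ∈ s, ((t (ℓ + 1) - t ℓ) * z ℓ) ^ 2 / Gw γ t ℓ ≤
      ∑ ℓ ∈ s, Ew γ t ℓ * z ℓ ^ 2 := by
    refine Finset.sum_le_sum fun ℓ hℓ => ?_
    have hG := hGpos ℓ hℓ
    rw [div_le_iff₀ hG]
    have h1 := sq_le_EG hγ t ℓ (hlt ℓ hℓ).le
    nlinarith [mul_nonneg (sub_nonneg.mpr h1) (sq_nonneg (z ℓ))]
  have hGsum : ∑ ℓ ∈ s, Gw γ t ℓ ≤ Real.exp (-γ * t (k + 1)) / γ := by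
    rw [hs, tele γ t (k + 1) N (by omega)]
    have h2 := (Real.exp_pos (-γ * t N)).le
    gcongr (?_) / γ
    linarith
  have hGsum0 : 0 ≤ ∑ ℓ ∈ s, Gw γ t ℓ := Finset.sum_nonneg fun ℓ hℓ => (hGpos ℓ hℓ).le
  have hEkG : Ew γ t k * ∑ ℓ ∈ s, Gw γ t ℓ ≤ (t (k + 1) - t k) / γ := by
    have h3 : Ew γ t k * ∑ ℓ ∈ s, Gw γ t ℓ ≤
        ((t (k + 1) - t k) * Real.exp (γ * t (k + 1))) * (Real.exp (-γ * t (k + 1)) / γ) := by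
      apply mul_le_mul (E_le hγ) hGsum hGsum0
      exact mul_nonneg (by linarith) (Real.exp_pos _).le
    refine h3.trans (le_of_eq ?_)
    have e1 : Real.exp (γ * t (k + 1)) * Real.exp (-γ * t (k + 1)) = 1 := by
      rw [← Real.exp_add]; simp
    have h4 : (t (k + 1) - t k) * Real.exp (γ * t (k + 1)) * (Real.exp (-γ * t (k + 1)) / γ) =
        (t (k + 1) - t k) * (Real.exp (γ * t (k + 1)) * Real.exp (-γ * t (k + 1))) / γ := by
      ring
    rw [h4, e1, mul_one]
  calc Ew γ t k * (∑ ℓ ∈ s, (t (ℓ + 1) - t ℓ) * z ℓ) ^ 2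
      ≤ Ew γ t k * ((∑ ℓ ∈ s, Gw γ t ℓ) * ∑ ℓ ∈ s, Ew γ t ℓ * z ℓ ^ 2) := by
        apply mul_le_mul_of_nonneg_left _ hEk0
        exact hCS.trans (mul_le_mul_of_nonneg_left hterm hGsum0)
    _ = (Ew γ t k * ∑ ℓ ∈ s, Gw γ t ℓ) * ∑ ℓ ∈ s, Ew γ t ℓ * z ℓ ^ 2 := by ring
    _ ≤ ((t (k + 1) - t k) / γ) * ∑ ℓ ∈ s, Ew γ t ℓ * z ℓ ^ 2 :=
        mul_le_mul_of_nonneg_right hEkG (Finset.sum_nonneg hE0)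
    _ = ∑ ℓ ∈ s, ((t (k + 1) - t k) / γ) * (Ew γ t ℓ * z ℓ ^ 2) := Finset.mul_sum ..

open intervalIntegral in
lemma exp_int (γ : ℝ) (hγ : γ ≠ 0) (a b : ℝ) :
    (∫ s in a..b, Real.exp (γ * s)) = (Real.exp (γ * b) - Real.exp (γ * a)) / γ := by
  rw [intervalIntegral.integral_comp_mul_left Real.exp hγ]
  rw [integral_exp, smul_eq_mul]
  field_simp

lemma exp_int' {γ : ℝ} (hγ : γ ≠ 0) (t : ℕ → ℝ) (k : ℕ) :
    (∫ s in (t k)..(t (k + 1)), Real.exp (γ * s)) = Ew γ t k := by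
  rw [Ew]; exact exp_int γ hγ _ _

lemma pointwise {γ : ℝ} (hγ : 0 < γ) {N : ℕ} {t : ℕ → ℝ}
    (htmono : ∀ k < N, t k < t (k + 1)) (z : ℕ → ℕ → ℝ) :
    ∑ k ∈ Finset.range (N - 1),
        Ew γ t k * (∑ ℓ ∈ Finset.Ico (k + 1) N, (t (ℓ + 1) - t ℓ) * z ℓ k) ^ 2
      ≤ (1 / γ) * ∑ k ∈ Finset.Ico 1 N,
          Ew γ t k * ∑ ℓ ∈ Finset.range k, (t (ℓ + 1) - t ℓ) * z k ℓ ^ 2 := by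
  calc ∑ k ∈ Finset.range (N - 1),
        Ew γ t k * (∑ ℓ ∈ Finset.Ico (k + 1) N, (t (ℓ + 1) - t ℓ) * z ℓ k) ^ 2
      ≤ ∑ k ∈ Finset.range (N - 1), ∑ ℓ ∈ Finset.Ico (k + 1) N,
          ((t (k + 1) - t k) / γ) * (Ew γ t ℓ * z ℓ k ^ 2) :=
        Finset.sum_le_sum fun k hk =>
          perk hγ htmono (by simp only [Finset.mem_range] at hk; omega) (fun ℓ => z ℓ k)
    _ = ∑ ℓ ∈ Finset.Ico 1 N, ∑ k ∈ Finset.range ℓ,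
          ((t (k + 1) - t k) / γ) * (Ew γ t ℓ * z ℓ k ^ 2) :=
        Finset.sum_comm' (by
          intro k ℓ; simp only [Finset.mem_range, Finset.mem_Ico]; omega)
    _ = _ := by
        rw [Finset.mul_sum]
        refine Finset.sum_congr rfl fun k _ => ?_
        simp only [Finset.mul_sum]
        exact Finset.sum_congr rfl fun ℓ _ => by ring

lemma sum_ofReal_mul_lintegral {S : Type*} [MeasurableSpace S] (μ : Measure S)
    (s : Finset ℕ) (c : ℕ → ℝ) (hc : ∀ k ∈ s, 0 ≤ c k) (f : ℕ → S → ℝ)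
    (hf : ∀ k, Measurable (f k)) (hf0 : ∀ k ∈ s, ∀ x, 0 ≤ f k x) :
    ∑ k ∈ s, ENNReal.ofReal (c k) * ∫⁻ x, ENNReal.ofReal (f k x) ∂μ
      = ∫⁻ x, ENNReal.ofReal (∑ k ∈ s, c k * f k x) ∂μ := by
  calc ∑ k ∈ s, ENNReal.ofReal (c k) * ∫⁻ x, ENNReal.ofReal (f k x) ∂μ
      = ∑ k ∈ s, ∫⁻ x, ENNReal.ofReal (c k * f k x) ∂μ := by
        refine Finset.sum_congr rfl fun k hk => ?_
        rw [← lintegral_const_mul _ (hf k).ennreal_ofReal]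
        exact lintegral_congr fun x => (ENNReal.ofReal_mul (hc k hk)).symm
    _ = ∫⁻ x, ∑ k ∈ s, ENNReal.ofReal (c k * f k x) ∂μ :=
        (lintegral_finset_sum _ fun k _ => ((hf k).const_mul _).ennreal_ofReal).symm
    _ = _ := by
        refine lintegral_congr fun x => ?_
        rw [ENNReal.ofReal_sum_of_nonneg fun k hk => mul_nonneg (hc k hk) (hf0 k hk x)]

/-- Key weighted kernel estimate in the proof of the discrete Gronwall-like
inequality (Lemma 2.3). -/
theorem stmt_5
    {T : ℝ} (hT : 0 < T)
    {S : Type*} [MeasurableSpace S] (μ : Measure S)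
    {N : ℕ} (hN : 2 ≤ N) (t : ℕ → ℝ)
    (ht0 : t 0 = 0) (htN : t N = T)
    (htmono : ∀ k < N, t k < t (k + 1))
    (ζ : ℕ → ℕ → S → ℝ)
    (hζ0 : ∀ k ℓ x, 0 ≤ ζ k ℓ x)
    (hζm : ∀ k ℓ, Measurable (ζ k ℓ))
    {γ : ℝ} (hγ : 0 < γ) :
    (∑ k ∈ Finset.range (N - 1),
        ENNReal.ofReal (∫ s in (t k)..(t (k + 1)), Real.exp (γ * s)) *
          ∫⁻ x, ENNReal.ofReal
            ((∑ ℓ ∈ Finset.Ico (k + 1) N, (t (ℓ + 1) - t ℓ) * ζ ℓ k x) ^ 2) ∂μ)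
      ≤ ENNReal.ofReal (1 / γ) *
          ∑ k ∈ Finset.Ico 1 N,
            ENNReal.ofReal (∫ s in (t k)..(t (k + 1)), Real.exp (γ * s)) *
              ∫⁻ x, ENNReal.ofReal
                (∑ ℓ ∈ Finset.range k, (t (ℓ + 1) - t ℓ) * (ζ k ℓ x) ^ 2) ∂μ := by
  have hne : γ ≠ 0 := ne_of_gt hγ
  simp only [exp_int' hne t]
  rw [sum_ofReal_mul_lintegral μ (Finset.range (N - 1)) (fun k => Ew γ t k)
      (fun k hk => E_nonneg hγ
        (htmono k (by simp only [Finset.mem_range] at hk; omega)).le)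
      (fun k x => (∑ ℓ ∈ Finset.Ico (k + 1) N, (t (ℓ + 1) - t ℓ) * ζ ℓ k x) ^ 2)
      (fun k => (Finset.measurable_sum _ fun ℓ _ => (hζm ℓ k).const_mul _).pow_const 2)
      (fun k _ x => sq_nonneg _)]
  rw [sum_ofReal_mul_lintegral μ (Finset.Ico 1 N) (fun k => Ew γ t k)
      (fun k hk => E_nonneg hγ (htmono k (Finset.mem_Ico.mp hk).2).le)
      (fun k x => ∑ ℓ ∈ Finset.range k, (t (ℓ + 1) - t ℓ) * ζ k ℓ x ^ 2)
      (fun k => Finset.measurable_sum _ fun ℓ _ => ((hζm k ℓ).pow_const 2).const_mul _)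
      (fun k hk x => Finset.sum_nonneg fun ℓ hℓ => by
        have h1 := htmono ℓ (by
          simp only [Finset.mem_Ico] at hk
          simp only [Finset.mem_range] at hℓ
          omega)
        exact mul_nonneg (by linarith) (sq_nonneg _))]
  rw [← lintegral_const_mul _ ((Finset.measurable_sum _ fun k _ =>
      (Finset.measurable_sum _ fun ℓ _ =>
        ((hζm k ℓ).pow_const 2).const_mul _).const_mul _).ennreal_ofReal)]
  refine lintegral_mono fun x => ?_
  rw [← ENNReal.ofReal_mul (by positivity : (0:ℝ) ≤ 1 / γ)]
  exact ENNReal.ofReal_le_ofReal (pointwise hγ htmono fun a b => ζ a b x)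
end

section
/- Let {a_k}_{k=0}^{N−1} be a nonnegative real sequence. For every γ > 0 one has Σ_{k=0}^{N−2} Γ_k · ( Σ_{ℓ=k+1}^{N−1} Δt_ℓ a_ℓ ) ≤ (1/γ) · Σ_{k=0}^{N−1} Γ_k a_k, where Γ_k := ∫_{t_k}^{t_{k+1}} e^{γ t} dt. (Tail-sum estimate in the proof of the discrete Gronwall-like inequality, Lemma 2.3, proved by interchanging the order of summation and using Δt_k e^{γ t_k} ≤ Γ_k ≤ Δt_k e^{γ t_{k+1}}.) -/
open MeasureTheory Set

/-- Tail-sum estimate in the proof of the discrete Gronwall-like inequality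
(Lemma 2.3). -/
theorem stmt_6
    {T : ℝ} (hT : 0 < T)
    {N : ℕ} (hN : 2 ≤ N) (t : ℕ → ℝ)
    (ht0 : t 0 = 0) (htN : t N = T)
    (htmono : ∀ k < N, t k < t (k + 1))
    (a : ℕ → ℝ) (ha0 : ∀ k, 0 ≤ a k)
    {γ : ℝ} (hγ : 0 < γ) :
    (∑ k ∈ Finset.range (N - 1),
        (∫ s in (t k)..(t (k + 1)), Real.exp (γ * s)) *
          ∑ ℓ ∈ Finset.Ico (k + 1) N, (t (ℓ + 1) - t ℓ) * a ℓ)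
      ≤ (1 / γ) * ∑ k ∈ Finset.range N,
          (∫ s in (t k)..(t (k + 1)), Real.exp (γ * s)) * a k := by
  have hγ' : γ ≠ 0 := ne_of_gt hγ
  have hΓ : ∀ k : ℕ, (∫ s in (t k)..(t (k + 1)), Real.exp (γ * s))
      = (Real.exp (γ * t (k + 1)) - Real.exp (γ * t k)) / γ := by
    intro k
    rw [intervalIntegral.integral_comp_mul_left (fun x => Real.exp x) hγ',
      integral_exp, smul_eq_mul]
    ring
  simp_rw [hΓ, Finset.mul_sum]
  -- extend outer sum from range (N-1) to range N (extra term is zero)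
  have hext : (∑ k ∈ Finset.range (N - 1),
        ∑ ℓ ∈ Finset.Ico (k + 1) N,
          (Real.exp (γ * t (k + 1)) - Real.exp (γ * t k)) / γ *
            ((t (ℓ + 1) - t ℓ) * a ℓ))
      = ∑ k ∈ Finset.range N,
        ∑ ℓ ∈ Finset.Ico (k + 1) N,
          (Real.exp (γ * t (k + 1)) - Real.exp (γ * t k)) / γ *
            ((t (ℓ + 1) - t ℓ) * a ℓ) := by
    have hN1 : N - 1 + 1 = N := by omega
    rw [← hN1, Finset.sum_range_succ, hN1]
    simp
  rw [hext]
  -- swap the order of summation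
  rw [Finset.range_eq_Ico, Finset.sum_Ico_Ico_comm' 0 N]
  -- termwise comparison
  refine Finset.sum_le_sum ?_
  intro ℓ hℓ
  rw [Finset.mem_Ico] at hℓ
  have hℓN : ℓ < N := hℓ.2
  -- inner telescoping sum
  have htel : (∑ k ∈ Finset.Ico 0 ℓ,
      (Real.exp (γ * t (k + 1)) - Real.exp (γ * t k)) / γ *
        ((t (ℓ + 1) - t ℓ) * a ℓ))
      = (Real.exp (γ * t ℓ) - Real.exp (γ * t 0)) / γ * ((t (ℓ + 1) - t ℓ) * a ℓ) := by
    rw [← Finset.sum_mul, ← Finset.range_eq_Ico]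
    congr 1
    rw [← Finset.sum_div]
    congr 1
    exact Finset.sum_range_sub (fun k => Real.exp (γ * t k)) ℓ
  rw [htel, ht0]
  -- key estimate per term
  have hd : 0 < t (ℓ + 1) - t ℓ := sub_pos.mpr (htmono ℓ hℓN)
  have hE : Real.exp (γ * t (ℓ + 1)) = Real.exp (γ * t ℓ) * Real.exp (γ * (t (ℓ + 1) - t ℓ)) := by
    rw [← Real.exp_add]; ring_nf
  have hexp : γ * (t (ℓ + 1) - t ℓ) + 1 ≤ Real.exp (γ * (t (ℓ + 1) - t ℓ)) :=
    Real.add_one_le_exp _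
  have hA : (0 : ℝ) < Real.exp (γ * t ℓ) := Real.exp_pos _
  have ha := ha0 ℓ
  rw [mul_zero, Real.exp_zero]
  rw [div_mul_eq_mul_div, div_le_iff₀ hγ, hE]
  have hrw : 1 / γ * ((Real.exp (γ * t ℓ) * Real.exp (γ * (t (ℓ + 1) - t ℓ)) -
      Real.exp (γ * t ℓ)) / γ * a ℓ) * γ
      = (Real.exp (γ * t ℓ) * Real.exp (γ * (t (ℓ + 1) - t ℓ)) -
        Real.exp (γ * t ℓ)) * a ℓ / γ := by
    field_simp
  rw [hrw, le_div_iff₀ hγ]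
  nlinarith [mul_le_mul_of_nonneg_left hexp (mul_nonneg hA.le ha),
    mul_nonneg (mul_nonneg hd.le ha) hγ.le,
    mul_nonneg (mul_nonneg hd.le ha) (mul_nonneg hγ.le hA.le)]
end

section
/- Let (Ω, F, P) be a probability space, G ⊆ F a sub-σ-algebra, a < b real numbers, m ∈ ℕ, and Y : Ω × [a,b] → ℝ^m a (F ⊗ Borel)-measurable map with E[ ∫_a^b |Y(t)|² dt ] < ∞. Define Ȳ := (1/(b−a)) · E[ ∫_a^b Y(t) dt | G ]. Then for every G-measurable η ∈ L²(Ω; ℝ^m) one has E[ ∫_a^b |Y(t) − Ȳ|² dt ] ≤ E[ ∫_a^b |Y(t) − η|² dt ]; that is, Ȳ is the best approximation of Y on [a,b] among square-integrable G-measurable random variables in the space–time L² norm. (The best-approximation property of the conditionally averaged process, used in the proofs of Corollary 3.1 and Theorem 5.3.) -/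
open MeasureTheory Set

open scoped RealInnerProductSpace

/-!
For fixed `ω`, expanding the square in time around the time average `A ω = ⨍ t, Y ω t` gives
`∫ ‖Y ω t - w‖² dt = (∫ ‖Y ω t‖² dt - (b - a) ‖A ω‖²) + (b - a) ‖A ω - w‖²`.
Integrating over `ω`, the first term does not depend on the candidate `η`, so it remains to minimise
`E ‖A - η‖²` over square-integrable `G`-measurable `η`. Conditional expectation is the orthogonal
projection of `L²` onto the `G`-measurable subspace, so `E[A | G]` is the minimiser, and it agrees
almost surely with `Ȳ`.
-/

section

variable {α Ω T E : Type*} [NormedAddCommGroup E]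

theorem ae_memLp_two_of_integrable_sq_norm [MeasurableSpace Ω] [MeasurableSpace T]
    {P : Measure Ω} [SFinite P] {ν : Measure T} [SFinite ν] {Y : Ω → T → E}
    (hY : StronglyMeasurable (fun p : Ω × T => Y p.1 p.2))
    (hYint : Integrable (fun p : Ω × T => ‖Y p.1 p.2‖ ^ 2) (P.prod ν)) :
    ∀ᵐ ω ∂P, MemLp (Y ω) 2 ν := by
  filter_upwards [hYint.prod_right_ae] with ω h
  exact (memLp_two_iff_integrable_sq_norm
    (hY.comp_measurable measurable_prodMk_left).aestronglyMeasurable).mpr h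

variable [InnerProductSpace ℝ E] {m m0 : MeasurableSpace α} {μ : Measure α}

theorem MeasureTheory.L2.sq_norm_eq_integral (f : α →₂[μ] E) :
    ‖f‖ ^ 2 = ∫ x, ‖f x‖ ^ 2 ∂μ := by
  simp only [← real_inner_self_eq_norm_sq, L2.inner_def]

variable [CompleteSpace E]

theorem integral_norm_sub_sq_eq [IsFiniteMeasure μ] {f : α → E} (hf : MemLp f 2 μ) (w : E) :
    ∫ x, ‖f x - w‖ ^ 2 ∂μ
      = (∫ x, ‖f x‖ ^ 2 ∂μ - μ.real univ * ‖⨍ x, f x ∂μ‖ ^ 2)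
        + μ.real univ * ‖(⨍ x, f x ∂μ) - w‖ ^ 2 := by
  have hsq : Integrable (fun x => ‖f x‖ ^ 2) μ := hf.integrable_norm_pow two_ne_zero
  have hinner : Integrable (fun x => 2 * ⟪w, f x⟫) μ :=
    ((hf.integrable one_le_two).const_inner w).const_mul 2
  have hdiff : Integrable (fun x => ‖f x‖ ^ 2 - 2 * ⟪w, f x⟫) μ := hsq.sub hinner
  calc ∫ x, ‖f x - w‖ ^ 2 ∂μ = ∫ x, ‖f x‖ ^ 2 - 2 * ⟪w, f x⟫ + ‖w‖ ^ 2 ∂μ := by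
        simp only [norm_sub_sq_real, real_inner_comm]
    _ = ∫ x, ‖f x‖ ^ 2 ∂μ - 2 * ⟪w, ∫ x, f x ∂μ⟫ + μ.real univ * ‖w‖ ^ 2 := by
        rw [integral_add hdiff (integrable_const _), integral_sub hsq hinner,
          integral_const_mul, integral_inner (hf.integrable one_le_two), integral_const,
          smul_eq_mul]
    _ = _ := by
        rw [← measure_smul_average μ f, inner_smul_right, norm_sub_sq_real, real_inner_comm]
        ring

theorem measureReal_univ_mul_sq_norm_average_le [IsFiniteMeasure μ] {f : α → E}
    (hf : MemLp f 2 μ) : μ.real univ * ‖⨍ x, f x ∂μ‖ ^ 2 ≤ ∫ x, ‖f x‖ ^ 2 ∂μ := by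
  have h := integral_norm_sub_sq_eq hf (⨍ x, f x ∂μ)
  rw [sub_self, norm_zero] at h
  have : 0 ≤ ∫ x, ‖f x - ⨍ y, f y ∂μ‖ ^ 2 ∂μ := integral_nonneg fun x => sq_nonneg _
  linarith

theorem integral_norm_sub_condExp_sq_le [IsFiniteMeasure μ] (hm : m ≤ m0) {f g : α → E}
    (hf : MemLp f 2 μ) (hg : MemLp g 2 μ) (hgm : AEStronglyMeasurable[m] g μ) :
    ∫ x, ‖f x - (μ[f|m]) x‖ ^ 2 ∂μ ≤ ∫ x, ‖f x - g x‖ ^ 2 ∂μ := by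
  have : Fact (m ≤ m0) := ⟨hm⟩
  have hgK : hg.toLp g ∈ lpMeas E ℝ m 2 μ :=
    mem_lpMeas_iff_aestronglyMeasurable.mpr (hgm.congr hg.coeFn_toLp.symm)
  have hproj : ‖hf.toLp f - condExpL2 E ℝ hm (hf.toLp f)‖ ≤ ‖hf.toLp f - hg.toLp g‖ := by
    rw [condExpL2, ← Submodule.starProjection_apply, Submodule.starProjection_minimal]
    exact ciInf_le ⟨0, forall_mem_range.mpr fun _ => norm_nonneg _⟩ (⟨_, hgK⟩ : lpMeas E ℝ m 2 μ)
  calc ∫ x, ‖f x - (μ[f|m]) x‖ ^ 2 ∂μ = ‖hf.toLp f - condExpL2 E ℝ hm (hf.toLp f)‖ ^ 2 := by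
        rw [L2.sq_norm_eq_integral]
        refine integral_congr_ae ?_
        filter_upwards [Lp.coeFn_sub (hf.toLp f) (condExpL2 E ℝ hm (hf.toLp f) : α →₂[μ] E),
          hf.coeFn_toLp, hf.condExpL2_ae_eq_condExp (𝕜 := ℝ) hm] with x hsub hfx hcond
        rw [hsub, Pi.sub_apply, hfx, hcond]
    _ ≤ ‖hf.toLp f - hg.toLp g‖ ^ 2 := by gcongr
    _ = ∫ x, ‖f x - g x‖ ^ 2 ∂μ := by
        rw [L2.sq_norm_eq_integral]
        refine integral_congr_ae ?_
        filter_upwards [Lp.coeFn_sub (hf.toLp f) (hg.toLp g), hf.coeFn_toLp, hg.coeFn_toLp]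
          with x hsub hfx hgx
        rw [hsub, Pi.sub_apply, hfx, hgx]

section SpaceTime

variable [MeasurableSpace Ω] [MeasurableSpace T] {P : Measure Ω} [SFinite P]
  {ν : Measure T} [IsFiniteMeasure ν] {Y : Ω → T → E}

theorem memLp_average_of_integrable_sq_norm [NeZero ν]
    (hY : StronglyMeasurable (fun p : Ω × T => Y p.1 p.2))
    (hYint : Integrable (fun p : Ω × T => ‖Y p.1 p.2‖ ^ 2) (P.prod ν)) :
    MemLp (fun ω => ⨍ t, Y ω t ∂ν) 2 P := by
  have hmeas : StronglyMeasurable (fun ω => ⨍ t, Y ω t ∂ν) :=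
    hY.integral_prod_right' (ν := (ν univ)⁻¹ • ν)
  have hc : 0 < ν.real univ := measureReal_univ_pos
  refine (memLp_two_iff_integrable_sq_norm hmeas.aestronglyMeasurable).mpr <|
    (hYint.integral_prod_left.const_mul (ν.real univ)⁻¹).mono'
      (hmeas.norm.pow 2).aestronglyMeasurable ?_
  filter_upwards [ae_memLp_two_of_integrable_sq_norm hY hYint] with ω hω
  rw [Real.norm_of_nonneg (sq_nonneg _), le_inv_mul_iff₀ hc]
  exact measureReal_univ_mul_sq_norm_average_le hω

theorem integral_integral_norm_sub_sq_eq [NeZero ν]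
    (hY : StronglyMeasurable (fun p : Ω × T => Y p.1 p.2))
    (hYint : Integrable (fun p : Ω × T => ‖Y p.1 p.2‖ ^ 2) (P.prod ν))
    {W : Ω → E} (hW : MemLp W 2 P) :
    ∫ ω, ∫ t, ‖Y ω t - W ω‖ ^ 2 ∂ν ∂P
      = ∫ ω, (∫ t, ‖Y ω t‖ ^ 2 ∂ν - ν.real univ * ‖⨍ t, Y ω t ∂ν‖ ^ 2) ∂P
        + ν.real univ * ∫ ω, ‖(⨍ t, Y ω t ∂ν) - W ω‖ ^ 2 ∂P := by
  have hA := memLp_average_of_integrable_sq_norm hY hYint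
  have hK : Integrable (fun ω => ∫ t, ‖Y ω t‖ ^ 2 ∂ν - ν.real univ * ‖⨍ t, Y ω t ∂ν‖ ^ 2) P :=
    hYint.integral_prod_left.sub ((hA.integrable_norm_pow two_ne_zero).const_mul _)
  have hAW : Integrable (fun ω => ν.real univ * ‖(⨍ t, Y ω t ∂ν) - W ω‖ ^ 2) P :=
    ((hA.sub hW).integrable_norm_pow two_ne_zero).const_mul _
  rw [← integral_const_mul, ← integral_add hK hAW]
  refine integral_congr_ae ?_
  filter_upwards [ae_memLp_two_of_integrable_sq_norm hY hYint] with ω hω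
  exact integral_norm_sub_sq_eq hω (W ω)

end SpaceTime

end

/-- The conditionally averaged random variable
`Ȳ = (b-a)⁻¹ • E[ ∫_a^b Y(t) dt | G ]` is the best approximation, in the
space–time L² norm, of the process `Y` on `[a,b]` among square-integrable
`G`-measurable random variables (used in Corollary 3.1 and Theorem 5.3). -/
theorem stmt_9
    {Ω : Type*} (G : MeasurableSpace Ω) {F : MeasurableSpace Ω} (hG : G ≤ F)
    (P : Measure Ω) [IsProbabilityMeasure P]
    {a b : ℝ} (hab : a < b) (m : ℕ)
    (Y : Ω → ℝ → EuclideanSpace ℝ (Fin m))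
    (hYmeas : Measurable (fun p : Ω × ℝ => Y p.1 p.2))
    (hYint : Integrable (fun p : Ω × ℝ => ‖Y p.1 p.2‖ ^ 2)
      (P.prod (volume.restrict (Icc a b))))
    (η : Ω → EuclideanSpace ℝ (Fin m))
    (hηmeas : StronglyMeasurable[G] η)
    (hηL2 : MemLp η 2 P) :
    (∫ ω, (∫ t in Icc a b,
        ‖Y ω t - (b - a)⁻¹ •
            (P[fun ω' => ∫ t in Icc a b, Y ω' t | G]) ω‖ ^ 2) ∂P)
      ≤ ∫ ω, (∫ t in Icc a b, ‖Y ω t - η ω‖ ^ 2) ∂P := by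
  have : NeZero (volume.restrict (Icc a b)) :=
    ⟨by simp [Measure.restrict_eq_zero, Real.volume_Icc, hab]⟩
  have hlen : volume.real (Icc a b) = b - a := Real.volume_real_Icc_of_le hab.le
  have hY := hYmeas.stronglyMeasurable
  have hA := memLp_average_of_integrable_sq_norm hY hYint
  have hcond : (fun ω => (b - a)⁻¹ • (P[fun ω' => ∫ t in Icc a b, Y ω' t | G]) ω)
      =ᵐ[P] P[fun ω => ⨍ t in Icc a b, Y ω t | G] := by
    have havg : (fun ω => ⨍ t in Icc a b, Y ω t) = (b - a)⁻¹ • fun ω => ∫ t in Icc a b, Y ω t := by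
      ext1 ω
      rw [setAverage_eq, hlen, Pi.smul_apply]
    rw [havg]
    exact (condExp_smul (b - a)⁻¹ (fun ω => ∫ t in Icc a b, Y ω t) G).symm
  rw [integral_integral_norm_sub_sq_eq hY hYint ((hA.condExp one_le_two).ae_eq hcond.symm),
    integral_integral_norm_sub_sq_eq hY hYint hηL2, measureReal_restrict_apply_univ, hlen]
  gcongr _ + (b - a) * ?_
  calc _ = ∫ ω, ‖(⨍ t in Icc a b, Y ω t) - (P[fun ω => ⨍ t in Icc a b, Y ω t | G]) ω‖ ^ 2 ∂P := by
        refine integral_congr_ae ?_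
        filter_upwards [hcond] with ω h
        rw [h]
    _ ≤ _ := integral_norm_sub_condExp_sq_le hG hA hηL2 hηmeas.aestronglyMeasurable
end
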